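/- arXiv:1110.3007 — 6 statements merged into one kernel-verified Lean document; each statement's English description precedes it below -/
import Mathlib

section
/- Let A be a commutative algebra over a field k of characteristic p > 0, let D be a k-derivation of A and a ∈ A. Then the derivation aD satisfies Hochschild's formula: (aD)^p = a^p · D^p + ((aD)^{p-1}(a)) · D, as k-linear endomorphisms of A. -/
/-!
Write `(a • D)^[n] = ∑ i, c n i * D^[i]`. The top coefficient is `a ^ n` and `c (n + 1) 1` is
`(a • D)^[n] a`, so it remains to see `c p i = 0` for `1 < i < p`. In characteristic `p` both
`(a • D)^[p]` and `D^[p]` are derivations (`p` divides `p.choose i` for `0 < i < p`), hence so is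
`Δ = (a • D)^[p] - a ^ p * D^[p] = ∑ i < p, c p i * D^[i]`. Extend `D` to `A[X]` with `D X = 1`:
comparing `Δ (X ^ m) = m * X ^ (m - 1) * Δ X` with `∑ i, c p i * m.descFactorial i * X ^ (m - i)`
gives `m ! * c p m = 0` by induction on `m`, and `m !` is a unit for `m < p`.
-/

open Finset Polynomial
open scoped Nat

namespace Derivation

section Leibniz

variable {R A : Type*} [CommSemiring R] [CommSemiring A] [Algebra R A] (D : Derivation R A A)

theorem iterate_apply_mul (n : ℕ) (x y : A) :
    D^[n] (x * y) = ∑ ij ∈ antidiagonal n, n.choose ij.1 • (D^[ij.1] x * D^[ij.2] y) := by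
  induction n with
  | zero => simp
  | succ n ih =>
    rw [sum_antidiagonal_choose_succ_nsmul (M := A) (fun i j => D^[i] x * D^[j] y) n]
    simp only [Function.iterate_succ_apply', ih, map_sum, map_nsmul, leibniz, smul_eq_mul,
      smul_add, sum_add_distrib]
    congr 1
    refine sum_congr rfl fun ⟨i, j⟩ hij => ?_
    rw [n.choose_symm_of_eq_add (HasAntidiagonal.mem_antidiagonal.1 hij).symm, mul_comm]

theorem iterate_prime_apply_mul {p : ℕ} (hp : p.Prime) (hpA : (p : A) = 0) (x y : A) :
    D^[p] (x * y) = x * D^[p] y + D^[p] x * y := by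
  rw [iterate_apply_mul,
    sum_eq_add_of_mem (0, p) (p, 0) (by simp) (by simp) (by simp [hp.ne_zero])]
  · simp [add_comm]
  · rintro ⟨i, j⟩ hij hne
    rw [HasAntidiagonal.mem_antidiagonal] at hij
    have hi0 : i ≠ 0 := by rintro rfl; simp_all
    have hip : i < p := by
      by_contra h
      have : j = 0 := by omega
      simp_all [show i = p by omega]
    obtain ⟨c, hc⟩ := hp.dvd_choose_self hi0 hip
    simp only [hc, mul_smul, ← Nat.cast_smul_eq_nsmul A p, hpA, zero_smul]

end Leibniz

section IteratePrime

variable {R A : Type*} [CommSemiring R] [CommRing A] [Algebra R A] (D : Derivation R A A)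

def iteratePrime {p : ℕ} (hp : p.Prime) (hpA : (p : A) = 0) : Derivation R A A :=
  Derivation.mk' ((D : A →ₗ[R] A) ^ p) fun x y => by
    simp only [Module.End.coe_pow, coeFn_coe, smul_eq_mul]
    rw [iterate_prime_apply_mul D hp hpA, mul_comm y]

@[simp]
theorem coe_iteratePrime {p : ℕ} (hp : p.Prime) (hpA : (p : A) = 0) :
    ⇑(D.iteratePrime hp hpA) = D^[p] := by
  rw [iteratePrime, coe_mk', Module.End.coe_pow, coeFn_coe]

theorem coe_smul_eq_mul (a : A) : ⇑(a • D) = fun y => a * D y := by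
  ext; simp

end IteratePrime

section Extension

variable {R A : Type*} [CommRing R] [CommRing A] [Algebra R A] (D : Derivation R A A)

noncomputable def polynomialExtension : Derivation R A[X] A[X] :=
  PolynomialModule.equivPolynomialSelf.compDer D.mapCoeffs + derivative'.restrictScalars R

@[simp]
theorem polynomialExtension_C (b : A) : D.polynomialExtension (C b) = C (D b) := by
  simp [polynomialExtension]

@[simp]
theorem polynomialExtension_X : D.polynomialExtension X = 1 := by
  simp [polynomialExtension]

end Extension

section Coefficients

variable {R A : Type*} [CommSemiring R] [CommRing A] [Algebra R A] (D : Derivation R A A) (a : A)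

/-- `smulIterateCoeff D a n i` is the coefficient of `D^[i]` in `(a • D)^[n]`. -/
def smulIterateCoeff : ℕ → ℕ → A
  | 0, 0 => 1
  | 0, _ + 1 => 0
  | _ + 1, 0 => 0
  | n + 1, i + 1 => a * D (smulIterateCoeff n (i + 1)) + a * smulIterateCoeff n i

theorem smulIterateCoeff_of_lt {n i : ℕ} (h : n < i) : D.smulIterateCoeff a n i = 0 := by
  induction n generalizing i with
  | zero => obtain ⟨i, rfl⟩ := Nat.exists_eq_add_one_of_ne_zero h.ne'; rfl
  | succ n ih =>
    obtain ⟨i, rfl⟩ := Nat.exists_eq_add_one_of_ne_zero (by omega : i ≠ 0)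
    simp [smulIterateCoeff, ih (by omega : n < i + 1), ih (by omega : n < i)]

theorem smulIterateCoeff_self (n : ℕ) : D.smulIterateCoeff a n n = a ^ n := by
  induction n with
  | zero => simp [smulIterateCoeff]
  | succ n ih => simp [smulIterateCoeff, smulIterateCoeff_of_lt, ih, pow_succ']

theorem smulIterateCoeff_succ_zero (n : ℕ) : D.smulIterateCoeff a (n + 1) 0 = 0 := rfl

theorem smulIterateCoeff_succ_one (n : ℕ) :
    D.smulIterateCoeff a (n + 1) 1 = (a • D)^[n] a := by
  induction n with
  | zero => simp [smulIterateCoeff]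
  | succ n ih =>
    rw [Function.iterate_succ_apply', ← ih]
    simp [smulIterateCoeff]

theorem iterate_smul_apply (n : ℕ) (x : A) :
    (a • D)^[n] x = ∑ i ∈ range (n + 1), D.smulIterateCoeff a n i * D^[i] x := by
  induction n with
  | zero => simp [smulIterateCoeff]
  | succ n ih =>
    have hshift : ∑ i ∈ range (n + 1), D^[i] x * (a * D (D.smulIterateCoeff a n i)) =
        ∑ i ∈ range (n + 1), a * D (D.smulIterateCoeff a n (i + 1)) * D (D^[i] x) := by
      have hfirst : D (D.smulIterateCoeff a n 0) = 0 := by cases n <;> simp [smulIterateCoeff]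
      rw [sum_range_succ', sum_range_succ _ n, smulIterateCoeff_of_lt D a (by omega : n < n + 1),
        hfirst]
      simp [Function.iterate_succ_apply', mul_comm]
    rw [Function.iterate_succ_apply', ih, sum_range_succ' _ (n + 1)]
    simp only [coe_smul_eq_mul, map_sum, leibniz, smul_eq_mul, sum_add_distrib, smulIterateCoeff,
      Function.iterate_succ_apply', add_mul, zero_mul, add_zero, hshift]
    rw [add_comm]
    congr 1
    exact sum_congr rfl fun i _ => by ring

theorem map_smulIterateCoeff {A' : Type*} [CommRing A'] [Algebra R A'] (D' : Derivation R A' A')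
    (f : A →+* A') (hf : ∀ z, D' (f z) = f (D z)) (n i : ℕ) :
    f (D.smulIterateCoeff a n i) = D'.smulIterateCoeff (f a) n i := by
  induction n generalizing i with
  | zero => cases i <;> simp [smulIterateCoeff]
  | succ n ih => cases i <;> simp [smulIterateCoeff, ← hf, ih]

end Coefficients

section Vanishing

variable {R B : Type*} [CommSemiring R] [CommRing B] [Algebra R B] (E : Derivation R B B)

theorem iterate_apply_pow_of_apply_eq_one {t : B} (ht : E t = 1) (i m : ℕ) :
    E^[i] (t ^ m) = (m.descFactorial i : B) * t ^ (m - i) := by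
  induction i with
  | zero => simp
  | succ i ih =>
    rw [Function.iterate_succ_apply', ih, leibniz, leibniz_pow, map_natCast, ht,
      Nat.descFactorial_succ, Nat.sub_sub]
    simp only [smul_eq_mul, nsmul_eq_mul, mul_one, Nat.cast_mul]
    ring

theorem eq_zero_of_eq_sum_iterate {t : B} (ht : E t = 1) (Δ : Derivation R B B) (c : ℕ → B)
    {N : ℕ} (hΔ : ∀ x, Δ x = ∑ i ∈ range N, c i * E^[i] x) (hfact : ∀ m < N, IsUnit (m ! : B))
    {m : ℕ} (hm : 2 ≤ m) (hmN : m < N) : c m = 0 := by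
  have hΔpow (n : ℕ) :
      Δ (t ^ n) = ∑ i ∈ range N, c i * ((n.descFactorial i : B) * t ^ (n - i)) := by
    simp only [hΔ, iterate_apply_pow_of_apply_eq_one E ht]
  have hc0 : c 0 = 0 := by
    have h := hΔpow 0
    rw [pow_zero, map_one_eq_zero, sum_eq_single_of_mem 0 (by simp; omega)] at h
    · simpa using h.symm
    · intro i _ hi
      simp [Nat.descFactorial_eq_zero_iff_lt.2 (Nat.pos_of_ne_zero hi)]
  have hΔt : Δ t = c 1 := by
    have h := hΔpow 1
    rw [pow_one, sum_eq_single_of_mem 1 (by simp; omega)] at h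
    · simpa using h
    · intro i _ hi
      rcases Nat.lt_or_gt_of_ne hi with hi | hi
      · simp [Nat.lt_one_iff.1 hi, hc0]
      · simp [Nat.descFactorial_eq_zero_iff_lt.2 hi]
  induction m using Nat.strong_induction_on with
  | _ m ih =>
    have h := hΔpow m
    rw [leibniz_pow, hΔt, sum_eq_add_of_mem 1 m (by simp; omega) (by simp; omega) (by omega)] at h
    · simp only [Nat.descFactorial_one, Nat.descFactorial_self, Nat.sub_self, pow_zero, mul_one,
        nsmul_eq_mul, smul_eq_mul] at h
      have hcm : (m ! : B) * c m = 0 := by linear_combination -h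
      exact (hfact m hmN).mul_right_eq_zero.1 hcm
    · intro i hi ⟨hi1, him⟩
      rcases Nat.lt_or_gt_of_ne him with hlt | hgt
      · obtain rfl | h2 : i = 0 ∨ 2 ≤ i := by omega
        · simp [hc0]
        · simp [ih i hlt h2 (by simpa using hi)]
      · simp [Nat.descFactorial_eq_zero_iff_lt.2 hgt]

end Vanishing

section Hochschild

variable {R A : Type*} [CommRing R] [CommRing A] [Algebra R A] (D : Derivation R A A) (a : A)
  {p : ℕ} (hp : p.Prime) (hpA : (p : A) = 0) (hfact : ∀ m < p, IsUnit (m ! : A))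
include hp hpA hfact

theorem smulIterateCoeff_prime_eq_zero {m : ℕ} (hm : 2 ≤ m) (hmp : m < p) :
    D.smulIterateCoeff a p m = 0 := by
  set E := D.polynomialExtension
  have hpB : (p : A[X]) = 0 := by rw [← _root_.map_natCast C, hpA, C_0]
  rw [← C_eq_zero, map_smulIterateCoeff D a E C (polynomialExtension_C D)]
  refine E.eq_zero_of_eq_sum_iterate (polynomialExtension_X D)
    ((C a • E).iteratePrime hp hpB - C a ^ p • E.iteratePrime hp hpB) _ (fun y => ?_)
    (fun m hm => by simpa using (hfact m hm).map C) hm hmp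
  rw [sub_apply, smul_apply, coe_iteratePrime, coe_iteratePrime, iterate_smul_apply,
    sum_range_succ, smulIterateCoeff_self, smul_eq_mul, add_sub_cancel_right]

theorem iterate_smul_prime_apply (x : A) :
    (a • D)^[p] x = a ^ p * D^[p] x + (a • D)^[p - 1] a * D x := by
  obtain ⟨q, rfl⟩ : ∃ q, p = q + 1 := ⟨p - 1, (Nat.sub_add_cancel hp.one_le).symm⟩
  have hp2 := hp.two_le
  rw [iterate_smul_apply, sum_eq_add_of_mem (q + 1) 1 (by simp) (by simp) (by omega),
    smulIterateCoeff_self, smulIterateCoeff_succ_one, Nat.add_sub_cancel,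
    Function.iterate_one]
  rintro i hi ⟨hip, hi1⟩
  obtain rfl | h2 : i = 0 ∨ 2 ≤ i := by omega
  · simp [smulIterateCoeff_succ_zero]
  · rw [smulIterateCoeff_prime_eq_zero D a hp hpA hfact h2 (by simp at hi; omega), zero_mul]

end Hochschild

end Derivation

/-- Hochschild's formula: for a `k`-derivation `D` of a commutative `k`-algebra `A`
in characteristic `p > 0` and `a ∈ A`, `(aD)^p = a^p·D^p + ((aD)^{p-1}(a))·D`
as `k`-linear endomorphisms of `A`. -/
theorem stmt_3 (k A : Type*) [Field k] [CommRing A] [Algebra k A]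
    (p : ℕ) [Fact p.Prime] [CharP k p] (D : Derivation k A A) (a : A) :
    ∀ x : A, (fun y => a * D y)^[p] x =
      a ^ p * (⇑D)^[p] x + ((fun y => a * D y)^[p - 1] a) * D x := by
  have hp : p.Prime := Fact.out
  have hpA : (p : A) = 0 := by rw [← map_natCast (algebraMap k A), CharP.cast_eq_zero, map_zero]
  have hfact (m : ℕ) (hm : m < p) : IsUnit (m ! : A) := by
    rw [← map_natCast (algebraMap k A)]
    refine (IsUnit.mk0 _ ?_).map _
    rw [Ne, CharP.cast_eq_zero_iff k p, hp.dvd_factorial]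
    omega
  rw [← D.coe_smul_eq_mul a]
  exact D.iterate_smul_prime_apply a hp hpA hfact
end

section
/- Let L be a restricted Lie algebra over a field k of characteristic p > 0, A a restricted L-module, A^L = {a ∈ A : X·a = 0 for all X ∈ L} the invariants, and f : A → A^L a p-semilinear map (f(a+b) = f(a)+f(b), f(αa) = α^p f(a)). Then A ⊕ L is a restricted Lie algebra with the semidirect product bracket and p-map (a+X)^{[p]} = X^{p-1}·a + X^{[p]} + f(a). -/
/-!
The semidirect product acts on `k × A` by `(a, X) · (t, m) = (0, t • a + X · m)`. This is a Lie
algebra map `ρ` into `Module.End k (k × A)` with the commutator bracket, the `A`-component of `u`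
is the second component of `ρ u (1, 0)`, and `X^{p-1} · a` is that of `ρ (a, X) ^ p (1, 0)`. So
the restricted axioms for the `A`-components reduce to two facts about an associative ring `R` of
characteristic `p`: `ad(w)^p = ad(w^p)`, and Jacobson's formula
`(r + s)^p = r^p + s^p + ∑ s_i`, where `i • s_i` is the coefficient of `λ^(i-1)` in
`ad(λr + s)^(p-1)(r)`. Both follow from `ad(w)^(p-1)(t) = ∑ w^(p-1-j) t w^j`, which holds
because `(p - 1).choose j ≡ (-1)^j`; for `w = λr + s` and `t = r` this sum is the `λ`-derivative
of `w^p`. Since `i` is invertible for `0 < i < p`, the `s_i` are forced to be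
`i⁻¹ • jacCoeff i`, and so they are transported by `ρ`. The `L`-components are the axioms of `L`,
and `f` only contributes additively, being `p`-semilinear with values in the invariants.
-/

/-- The coefficient of `λ^(i-1)` in `ad_{λx+y}^{p-1}(x)`, written out as a sum over words:
for each subset `S` of the `p-1` bracketing slots of cardinality `i-1`, bracket `x`
successively with `x` (for slots in `S`) and `y` (for slots not in `S`). -/
def jacCoeff {M : Type*} [AddCommMonoid M] (br : M → M → M) (p : ℕ) (x y : M) (i : ℕ) : M :=
  ∑ S ∈ Finset.univ.filter (fun S : Finset (Fin (p - 1)) => S.card = i - 1),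
    (List.ofFn (fun j : Fin (p - 1) => decide (j ∈ S))).foldl
      (fun acc b => br acc (if b then x else y)) x

/-- `pm` is a `p`-map for the bracket `br`, i.e. the three axioms of a restricted
Lie algebra in the sense of Jacobson. -/
def IsPMapOn (k : Type*) {M : Type*} [CommRing k] [AddCommGroup M] [Module k M]
    (br : M → M → M) (p : ℕ) (pm : M → M) : Prop :=
  (∀ (c : k) (x : M), pm (c • x) = c ^ p • pm x) ∧
  (∀ x y : M, br x (pm y) = (fun w => br w y)^[p] x) ∧
  (∀ x y : M, ∃ s : ℕ → M,
    (∀ i, 1 ≤ i → i ≤ p - 1 → i • s i = jacCoeff br p x y i) ∧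
    pm (x + y) = pm x + pm y + ∑ i ∈ Finset.Icc 1 (p - 1), s i)

/-- `br` is a Lie bracket: `k`-bilinear, alternating and satisfying the Leibniz/Jacobi identity. -/
def IsLieBracketOn (k : Type*) {M : Type*} [CommRing k] [AddCommGroup M] [Module k M]
    (br : M → M → M) : Prop :=
  (∀ x, IsLinearMap k (br x)) ∧ (∀ y, IsLinearMap k (fun x => br x y)) ∧
  (∀ x, br x x = 0) ∧
  (∀ x y z, br x (br y z) = br (br x y) z + br y (br x z))

namespace RestrictedSemidirect

open Polynomial Finset

section CharP

variable {k : Type*} [Ring k] {p : ℕ} [CharP k p]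

lemma natCast_ne_zero_of_mem_Icc {i : ℕ} (hi : i ∈ Icc 1 (p - 1)) : (i : k) ≠ 0 := by
  rw [mem_Icc] at hi
  rw [ne_eq, CharP.cast_eq_zero_iff k p]
  exact fun hdvd => absurd (Nat.le_of_dvd (by omega) hdvd) (by omega)

variable [hp : Fact p.Prime]

lemma cast_choose_pred {j : ℕ} (hj : j ≤ p - 1) : ((p - 1).choose j : k) = (-1) ^ j := by
  induction j with
  | zero => simp
  | succ j ih =>
    have hpascal := Nat.choose_succ_succ' (p - 1) j
    rw [Nat.sub_add_cancel hp.out.one_le] at hpascal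
    have hzero : (p.choose (j + 1) : k) = 0 :=
      (CharP.cast_eq_zero_iff k p _).2 (hp.out.dvd_choose_self j.succ_ne_zero (by omega))
    rw [hpascal, Nat.cast_add, ih (by omega)] at hzero
    rw [pow_succ, mul_neg_one]
    exact eq_neg_of_add_eq_zero_right hzero

lemma neg_one_pow_pred : (-1 : k) ^ (p - 1) = 1 := by
  have h : (-1 : k) ^ (p - 1) * -1 = -1 := by
    rw [← pow_succ, Nat.sub_add_cancel hp.out.one_le, neg_one_pow_char]
  simpa using congrArg (· * (-1 : k)) h

lemma neg_one_pow_mul_cast_choose_pred {j : ℕ} (hj : j ≤ p - 1) :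
    (-1 : k) ^ (p - 1 - j) * ((p - 1).choose j : k) = 1 := by
  rw [cast_choose_pred hj, ← pow_add, Nat.sub_add_cancel hj, neg_one_pow_pred]

end CharP

section Associative

variable {R : Type*} [Ring R] {p : ℕ} [hp : Fact p.Prime] [CharP R p]

lemma iterate_commutator_pred (w t : R) :
    (fun f : R => f * w - w * f)^[p - 1] t = ∑ j ∈ range p, w ^ (p - 1 - j) * t * w ^ j := by
  have had : (fun f : R => f * w - w * f)
      = ⇑(LinearMap.mulRight ℤ w + (-1 : ℤ) • LinearMap.mulLeft ℤ w) := by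
    ext f; simp [sub_eq_add_neg]
  have hcomm : Commute (LinearMap.mulRight ℤ w) ((-1 : ℤ) • LinearMap.mulLeft ℤ w) :=
    (LinearMap.commute_mulLeft_right w w).symm.smul_right _
  rw [had, ← Module.End.pow_apply, hcomm.add_pow, LinearMap.sum_apply,
    Nat.sub_add_cancel hp.out.one_le]
  refine sum_congr rfl fun j hj => ?_
  have hj : j ≤ p - 1 := by rw [mem_range] at hj; omega
  rw [_root_.smul_pow, Module.End.mul_apply, Module.End.mul_apply, LinearMap.smul_apply,
    Module.End.natCast_apply, LinearMap.pow_mulRight, LinearMap.pow_mulLeft,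
    LinearMap.mulRight_apply, LinearMap.mulLeft_apply, mul_smul_comm, smul_mul_assoc,
    smul_mul_assoc, ← natCast_zsmul, smul_smul, zsmul_eq_mul, Int.cast_mul, Int.cast_pow,
    Int.cast_neg, Int.cast_one, Int.cast_natCast, neg_one_pow_mul_cast_choose_pred hj, one_mul,
    mul_assoc]

lemma iterate_commutator (w t : R) :
    (fun f : R => f * w - w * f)^[p] t = t * w ^ p - w ^ p * t := by
  rw [← Nat.sub_add_cancel hp.out.one_le, Function.iterate_succ_apply',
    iterate_commutator_pred, sum_mul, mul_sum, ← sum_sub_distrib,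
    Nat.sub_add_cancel hp.out.one_le]
  have hterm : ∀ j ∈ range p,
      w ^ (p - 1 - j) * t * w ^ j * w - w * (w ^ (p - 1 - j) * t * w ^ j)
        = w ^ (p - (j + 1)) * t * w ^ (j + 1) - w ^ (p - j) * t * w ^ j := by
    intro j hj
    rw [mem_range] at hj
    rw [mul_assoc _ (w ^ j), ← pow_succ, ← mul_assoc w, ← mul_assoc w, ← pow_succ',
      show p - 1 - j + 1 = p - j by omega, Nat.sub_sub, Nat.add_comm 1 j]
  rw [sum_congr rfl hterm, sum_range_sub (fun j => w ^ (p - j) * t * w ^ j)]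
  simp

end Associative

section Words

variable {M : Type*} (br : M → M → M) (x y : M)

def bracketWord {n : ℕ} (g : Fin n → Bool) : M :=
  (List.ofFn g).foldl (fun acc b => br acc (if b then x else y)) x

lemma bracketWord_snoc {n : ℕ} (g : Fin n → Bool) (b : Bool) :
    bracketWord br x y (Fin.snoc g b) = br (bracketWord br x y g) (if b then x else y) := by
  simp only [bracketWord, List.ofFn_succ', Fin.snoc_castSucc, Fin.snoc_last,
    List.concat_eq_append, List.foldl_concat]

lemma jacCoeff_eq_sum_bracketWord [AddCommMonoid M] (p i : ℕ) :
    jacCoeff br p x y i = ∑ g : Fin (p - 1) → Bool with #{j | g j} = i - 1,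
      bracketWord br x y g := by
  refine sum_bij' (fun S _ j => decide (j ∈ S)) (fun g _ => ({j | g j} : Finset _))
    ?_ ?_ ?_ ?_ ?_ <;> intros <;> simp_all [bracketWord]

lemma map_jacCoeff {N : Type*} [AddCommMonoid M] [AddCommMonoid N] (g : M →+ N)
    (br' : N → N → N) (hg : ∀ a b, g (br a b) = br' (g a) (g b)) (p i : ℕ) :
    g (jacCoeff br p x y i) = jacCoeff br' p (g x) (g y) i := by
  simp only [jacCoeff, map_sum]
  exact sum_congr rfl fun S _ => (List.foldl_hom g fun a b => by cases b <;> simp [hg]).symm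

end Words

lemma card_filter_snoc {n : ℕ} (g : Fin n → Bool) (b : Bool) :
    #{j | Fin.snoc (α := fun _ => Bool) g b j} = #{j | g j} + if b then 1 else 0 := by
  rw [card_filter, card_filter, Fin.sum_univ_castSucc]
  simp

section Polynomial

variable {R : Type*} [Ring R] (r s : R)

lemma iterate_commutator_linear_eq_sum (n : ℕ) :
    (fun f => f * (C r * X + C s) - (C r * X + C s) * f)^[n] (C r)
      = ∑ g : Fin n → Bool,
          monomial #{j | g j} (bracketWord (fun a b => a * b - b * a) r s g) := by
  induction n with
  | zero => simp [bracketWord]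
  | succ n ih =>
    have hmonomial (c : ℕ) (t : R) :
        monomial c t * (C r * X + C s) - (C r * X + C s) * monomial c t
          = monomial c (t * s - s * t) + monomial (c + 1) (t * r - r * t) := by
      rw [C_mul_X_eq_monomial, ← monomial_zero_left]
      simp only [mul_add, add_mul, monomial_mul_monomial, map_sub, zero_add, add_zero,
        add_comm 1 c]
      abel
    rw [Function.iterate_succ_apply', ih, sum_mul, mul_sum, ← sum_sub_distrib,
      ← (Fin.snocEquiv fun _ => Bool).sum_comp, Fintype.sum_prod_type, Fintype.sum_bool,
      ← sum_add_distrib]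
    refine sum_congr rfl fun g _ => ?_
    simp only [Fin.snocEquiv, Equiv.coe_fn_mk]
    -- the decidability instances still mention `Fin.snocEquiv`, hence `erw`
    erw [card_filter_snoc, card_filter_snoc]
    simp only [bracketWord_snoc, hmonomial]
    simp [add_comm]

lemma jacCoeff_commutator_eq_coeff (p i : ℕ) :
    jacCoeff (fun a b : R => a * b - b * a) p r s i
      = ((fun f => f * (C r * X + C s) - (C r * X + C s) * f)^[p - 1] (C r)).coeff (i - 1) := by
  rw [iterate_commutator_linear_eq_sum, finsetSum_coeff, jacCoeff_eq_sum_bracketWord, sum_filter]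
  simp only [coeff_monomial]

lemma derivative_linear_pow_succ (n : ℕ) :
    derivative ((C r * X + C s) ^ (n + 1))
      = ∑ j ∈ range (n + 1), (C r * X + C s) ^ (n - j) * C r * (C r * X + C s) ^ j := by
  induction n with
  | zero => simp
  | succ n ih =>
    have hd : derivative (C r * X + C s) = C r := by simp
    rw [pow_succ, derivative_mul, ih, hd, sum_mul, sum_range_succ' _ (n + 1)]
    simp only [Nat.add_sub_add_right, mul_assoc, ← pow_succ, Nat.sub_zero, pow_zero, mul_one]

lemma coeff_linear_pow_zero (n : ℕ) : ((C r * X + C s) ^ n).coeff 0 = s ^ n := by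
  rw [← constantCoeff_apply, map_pow]
  simp

lemma coeff_linear_pow_self (n : ℕ) : ((C r * X + C s) ^ n).coeff n = r ^ n := by
  simpa using coeff_pow_of_natDegree_le (p := C r * X + C s) (m := n) natDegree_linear_le

lemma add_pow_eq_sum_coeff_linear_pow (n : ℕ) :
    (r + s) ^ n = ∑ i ∈ range (n + 1), ((C r * X + C s) ^ n).coeff i := by
  let ev : R[X] →+* R := eval₂RingHom' (RingHom.id R) 1 Commute.one_right
  have hw : ev (C r * X + C s) = r + s := by simp [ev]
  rw [← hw, ← map_pow]
  change eval₂ _ _ _ = _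
  rw [eval₂_eq_sum_range' _ (Nat.lt_succ_of_le (natDegree_pow_le_of_le n natDegree_linear_le))]
  simp

lemma add_pow_eq_add_add_sum_coeff_linear_pow {n : ℕ} (hn : 0 < n) :
    (r + s) ^ n = r ^ n + s ^ n + ∑ i ∈ Icc 1 (n - 1), ((C r * X + C s) ^ n).coeff i := by
  obtain ⟨m, rfl⟩ : ∃ m, n = m + 1 := ⟨n - 1, by omega⟩
  rw [add_pow_eq_sum_coeff_linear_pow, sum_range_succ, sum_range_succ', coeff_linear_pow_self,
    coeff_linear_pow_zero, Nat.add_sub_cancel, ← Ico_add_one_right_eq_Icc, ← zero_add 1,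
    ← sum_Ico_add', ← range_eq_Ico]
  abel

lemma nsmul_coeff_linear_pow_eq_jacCoeff {p : ℕ} [Fact p.Prime] [CharP R p] {i : ℕ}
    (hi : 1 ≤ i) :
    i • ((C r * X + C s) ^ p).coeff i = jacCoeff (fun a b : R => a * b - b * a) p r s i := by
  have hder := derivative_linear_pow_succ r s (p - 1)
  rw [Nat.sub_add_cancel (Fact.out : p.Prime).one_le] at hder
  rw [jacCoeff_commutator_eq_coeff, iterate_commutator_pred, ← hder, coeff_derivative,
    Nat.sub_add_cancel hi, nsmul_eq_mul', Nat.cast_sub hi, Nat.cast_one, sub_add_cancel]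

end Polynomial

section JacobsonSum

variable (k : Type*) [Field k] {M : Type*} [AddCommGroup M] [Module k M] (br : M → M → M)
  (p : ℕ) (x y : M)

def jacSum : M := ∑ i ∈ Icc 1 (p - 1), (i : k)⁻¹ • jacCoeff br p x y i

variable {k br p x y}

variable (k) in
lemma exists_jacobson_iff [CharP k p] {z w : M} :
    (∃ s : ℕ → M, (∀ i, 1 ≤ i → i ≤ p - 1 → i • s i = jacCoeff br p x y i) ∧
      z = w + ∑ i ∈ Icc 1 (p - 1), s i) ↔ z = w + jacSum k br p x y := by
  constructor
  · rintro ⟨s, hs, rfl⟩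
    refine congrArg (w + ·) (sum_congr rfl fun i hi => ?_)
    rw [← hs i (mem_Icc.1 hi).1 (mem_Icc.1 hi).2, ← Nat.cast_smul_eq_nsmul k,
      inv_smul_smul₀ (natCast_ne_zero_of_mem_Icc hi)]
  · intro h
    refine ⟨fun i => (i : k)⁻¹ • jacCoeff br p x y i, fun i h1 h2 => ?_, h⟩
    rw [← Nat.cast_smul_eq_nsmul k,
      smul_inv_smul₀ (natCast_ne_zero_of_mem_Icc (mem_Icc.2 ⟨h1, h2⟩))]

lemma map_jacSum {N : Type*} [AddCommGroup N] [Module k N] (g : M →ₗ[k] N) (br' : N → N → N)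
    (hg : ∀ a b, g (br a b) = br' (g a) (g b)) :
    g (jacSum k br p x y) = jacSum k br' p (g x) (g y) := by
  simp only [jacSum, map_sum, map_smul]
  exact sum_congr rfl fun i _ => congrArg _ (map_jacCoeff br x y g.toAddMonoidHom br' hg p i)

variable (k) in
lemma add_pow_eq_add_add_jacSum [CharP k p] [Fact p.Prime] {R : Type*} [Ring R] [Algebra k R]
    [CharP R p] (r s : R) :
    (r + s) ^ p = r ^ p + s ^ p + jacSum k (fun a b : R => a * b - b * a) p r s :=
  (exists_jacobson_iff k).1 ⟨_, fun _ hi _ => nsmul_coeff_linear_pow_eq_jacCoeff r s hi,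
    add_pow_eq_add_add_sum_coeff_linear_pow r s (Fact.out : p.Prime).pos⟩

end JacobsonSum

section Semidirect

variable {k L A : Type*} [CommRing k] [LieRing L] [LieAlgebra k L]
  [AddCommGroup A] [Module k A] [LieRingModule L A] [LieModule k L A]

def semidirectLie (u v : A × L) : A × L := (⁅u.2, v.1⁆ - ⁅v.2, u.1⁆, ⁅u.2, v.2⁆)

lemma isLieBracketOn_semidirectLie :
    IsLieBracketOn k (semidirectLie : A × L → A × L → A × L) := by
  refine ⟨fun _ => ⟨fun _ _ => ?_, fun _ _ => ?_⟩,
    fun _ => ⟨fun _ _ => ?_, fun _ _ => ?_⟩, fun _ => ?_, fun _ _ _ => ?_⟩ <;> ext <;>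
    simp only [semidirectLie, Prod.fst_add, Prod.snd_add, Prod.smul_fst, Prod.smul_snd, lie_add,
      add_lie, lie_smul, smul_lie, smul_sub, sub_self, lie_sub, lie_lie, Prod.fst_zero,
      Prod.snd_zero, lie_self] <;> abel

variable (k L A) in
def semidirectRep : (A × L) →ₗ[k] Module.End k (k × A) :=
  LinearMap.mk₂ k (fun u v => (0, v.1 • u.1 + ⁅u.2, v.2⁆))
    (fun u u' v => by ext <;> simp [smul_add]; abel)
    (fun c u v => by ext <;> simp [smul_comm c])
    (fun u v v' => by ext <;> simp [add_smul]; abel)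
    (fun c u v => by ext <;> simp [mul_smul])

@[simp]
lemma semidirectRep_apply (u : A × L) (v : k × A) :
    semidirectRep k L A u v = (0, v.1 • u.1 + ⁅u.2, v.2⁆) := rfl

lemma semidirectRep_semidirectLie (u v : A × L) :
    semidirectRep k L A (semidirectLie u v)
      = semidirectRep k L A u * semidirectRep k L A v
        - semidirectRep k L A v * semidirectRep k L A u := by
  ext <;> simp [semidirectLie, lie_lie, smul_sub]

lemma semidirectRep_pow_apply_zero_left (u : A × L) (n : ℕ) (m : A) :
    (semidirectRep k L A u ^ n) (0, m) = (0, (fun w => ⁅u.2, w⁆)^[n] m) := by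
  induction n with
  | zero => rfl
  | succ n ih => simp [pow_succ', ih, Function.iterate_succ_apply']

lemma semidirectRep_pow_apply_one_zero (u : A × L) {n : ℕ} (hn : 0 < n) :
    (semidirectRep k L A u ^ n) (1, 0) = (0, (fun w => ⁅u.2, w⁆)^[n - 1] u.1) := by
  obtain ⟨n, rfl⟩ : ∃ m, n = m + 1 := ⟨n - 1, by omega⟩
  simp [pow_succ, semidirectRep_pow_apply_zero_left]

instance charP_end_prod (p : ℕ) [CharP k p] : CharP (Module.End k (k × A)) p :=
  charP_of_injective_algebraMap (R := k) (fun c c' h => by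
    simpa using congrArg (fun T : Module.End k (k × A) => (T (1, 0)).1) h) p

lemma iterate_lie_smul_smul (c : k) (X : L) (a : A) (n : ℕ) :
    (fun w => ⁅c • X, w⁆)^[n] (c • a) = c ^ (n + 1) • (fun w => ⁅X, w⁆)^[n] a := by
  induction n with
  | zero => simp
  | succ n ih =>
    rw [Function.iterate_succ_apply', ih, Function.iterate_succ_apply', smul_lie, lie_smul,
      smul_smul, ← pow_succ']

variable (p : ℕ) (pm : L → L) (f : A → A)

def semidirectPMap (u : A × L) : A × L := ((fun w => ⁅u.2, w⁆)^[p - 1] u.1 + f u.1, pm u.2)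

variable {p pm f}

lemma semidirectPMap_smul (hp : 0 < p) (hpm : ∀ (c : k) (X : L), pm (c • X) = c ^ p • pm X)
    (hf : ∀ (c : k) (a : A), f (c • a) = c ^ p • f a) (c : k) (u : A × L) :
    semidirectPMap p pm f (c • u) = c ^ p • semidirectPMap p pm f u := by
  ext
  · simp only [semidirectPMap, Prod.smul_fst, Prod.smul_snd, iterate_lie_smul_smul,
      Nat.sub_add_cancel hp, hf, smul_add]
  · exact hpm c u.2

variable (k) in
lemma semidirectLie_semidirectPMap [Fact p.Prime] [CharP k p]
    (hpm : ∀ X Y : L, ⁅X, pm Y⁆ = (fun W => ⁅W, Y⁆)^[p] X)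
    (hres : ∀ (X : L) (m : A), ⁅pm X, m⁆ = (fun w => ⁅X, w⁆)^[p] m)
    (hf : ∀ (X : L) (a : A), ⁅X, f a⁆ = 0) (u v : A × L) :
    semidirectLie u (semidirectPMap p pm f v) = (fun w => semidirectLie w v)^[p] u := by
  have hp : 0 < p := (Fact.out : p.Prime).pos
  ext
  · have hrep : Function.Semiconj (semidirectRep k L A) (fun w => semidirectLie w v)
        (fun T => T * semidirectRep k L A v - semidirectRep k L A v * T) :=
      fun w => semidirectRep_semidirectLie w v
    have h := congrArg (fun T => (T (1, 0)).2) (hrep.iterate_right p u)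
    simp only [iterate_commutator, LinearMap.sub_apply, Module.End.mul_apply,
      semidirectRep_pow_apply_one_zero _ hp, semidirectRep_apply,
      semidirectRep_pow_apply_zero_left, one_smul, lie_zero, add_zero, zero_smul, zero_add,
      Prod.snd_sub] at h
    rw [h]
    simp only [semidirectLie, semidirectPMap, lie_add, hf, add_zero, hres]
  · have hsnd : Function.Semiconj Prod.snd (fun w => semidirectLie w v) (fun Z => ⁅Z, v.2⁆) :=
      fun w => rfl
    exact (hpm u.2 v.2).trans (hsnd.iterate_right p u).symm

end Semidirect

section Field

variable {k L A : Type*} [Field k] [LieRing L] [LieAlgebra k L]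
  [AddCommGroup A] [Module k A] [LieRingModule L A] [LieModule k L A]
  {p : ℕ} [Fact p.Prime] [CharP k p] {pm : L → L} {f : A → A}

lemma semidirectPMap_add
    (hpm : ∀ X Y : L, pm (X + Y) = pm X + pm Y + jacSum k (fun X Y : L => ⁅X, Y⁆) p X Y)
    (hf : ∀ a b : A, f (a + b) = f a + f b) (u v : A × L) :
    semidirectPMap p pm f (u + v)
      = semidirectPMap p pm f u + semidirectPMap p pm f v + jacSum k semidirectLie p u v := by
  have hp : 0 < p := (Fact.out : p.Prime).pos
  ext
  · have h := congrArg (fun T => (T (1, 0)).2)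
      (add_pow_eq_add_add_jacSum k (semidirectRep k L A u) (semidirectRep k L A v))
    rw [← map_add, ← map_jacSum _ _ semidirectRep_semidirectLie] at h
    simp only [LinearMap.add_apply, semidirectRep_pow_apply_one_zero _ hp, semidirectRep_apply,
      Prod.fst_add, Prod.snd_add, one_smul, lie_zero, add_zero] at h
    simp only [semidirectPMap, Prod.fst_add, Prod.snd_add, hf, h]
    abel
  · have hsnd := map_jacSum (br := semidirectLie) (p := p) (x := u) (y := v)
      (LinearMap.snd k A L) (fun X Y : L => ⁅X, Y⁆) fun _ _ => rfl
    exact (hpm u.2 v.2).trans (congrArg _ hsnd.symm)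

end Field

end RestrictedSemidirect

open RestrictedSemidirect in
/-- Let `L` be a restricted Lie algebra over `k` (char `p > 0`), `A` a restricted
`L`-module, and `f : A → A^L` a `p`-semilinear map into the invariants.  Then `A ⊕ L`
with the semidirect bracket and `p`-map `(a+X)^{[p]} = X^{p-1}·a + X^{[p]} + f(a)`
is a restricted Lie algebra. -/
theorem stmt_5 (k L A : Type*) [Field k] [LieRing L] [LieAlgebra k L]
    [AddCommGroup A] [Module k A] [LieRingModule L A] [LieModule k L A]
    (p : ℕ) [Fact p.Prime] [CharP k p]
    (pm : L → L) (hpm : IsPMapOn k (fun x y : L => ⁅x, y⁆) p pm)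
    (hres : ∀ (X : L) (m : A), ⁅pm X, m⁆ = (fun w => ⁅X, w⁆)^[p] m)
    (f : A → A) (hfadd : ∀ a b : A, f (a + b) = f a + f b)
    (hfsemi : ∀ (c : k) (a : A), f (c • a) = c ^ p • f a)
    (hfinv : ∀ (X : L) (a : A), ⁅X, f a⁆ = 0) :
    IsLieBracketOn k (fun u v : A × L => (⁅u.2, v.1⁆ - ⁅v.2, u.1⁆, ⁅u.2, v.2⁆)) ∧
    IsPMapOn k (fun u v : A × L => (⁅u.2, v.1⁆ - ⁅v.2, u.1⁆, ⁅u.2, v.2⁆)) p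
      (fun u : A × L => ((fun w => ⁅u.2, w⁆)^[p - 1] u.1 + f u.1, pm u.2)) := by
  obtain ⟨hpm_smul, hpm_lie, hpm_add⟩ := hpm
  exact ⟨isLieBracketOn_semidirectLie,
    semidirectPMap_smul (Fact.out : p.Prime).pos hpm_smul hfsemi,
    semidirectLie_semidirectPMap k hpm_lie hres hfinv,
    fun u v => (exists_jacobson_iff k).2
      (semidirectPMap_add (fun X Y => (exists_jacobson_iff k).1 (hpm_add X Y)) hfadd u v)⟩
end

section
/- In the transformation Lie algebra A ⊗_k g of a restricted Lie algebra g acting on a commutative k-algebra A via δ : g → Der_k(A) (char k = p), for every basis element 1⊗g_i one has (ad_{1⊗g_i})^p = ad_{1⊗g_i^{[p]}} on A ⊗_k g; consequently the operators τ(a⊗g) = a ⊗ [g, g_i] and ρ(a⊗g) = δ(g_i)(a) ⊗ g commute and ad_{1⊗g_i} = τ − ρ. -/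
open scoped TensorProduct

/-!
Write `τ = id ⊗ (-ad g_i)` and `ρ = δ(g_i) ⊗ id`. On pure tensors the bracket with `1 ⊗ g_i` is
`τ - ρ`, since `δ(g_i)` kills `1`. The two operators act on different tensor factors, so they
commute, and in characteristic `p` this gives `(τ - ρ)^p = τ^p - ρ^p`. Finally
`(-ad g_i)^p = -ad g_i^{[p]}` and `δ(g_i)^p = δ(g_i^{[p]})` are axioms of the restricted
structures, so `τ^p - ρ^p` is again the bracket with `1 ⊗ g_i^{[p]}`.
-/

open LinearMap (lTensor rTensor)

theorem Module.End.sub_pow_char_of_commute {k M : Type*} [Field k] [AddCommGroup M] [Module k M]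
    (p : ℕ) [Fact p.Prime] [CharP k p] {f f' : Module.End k M} (h : Commute f f') :
    (f - f') ^ p = f ^ p - f' ^ p := by
  rcases subsingleton_or_nontrivial M with hM | hM
  · exact Subsingleton.elim _ _
  · have : CharP (Module.End k M) p := charP_of_injective_algebraMap' k p
    exact _root_.sub_pow_char_of_commute _ h

theorem LinearMap.commute_lTensor_rTensor {R M N : Type*} [CommSemiring R] [AddCommMonoid M]
    [Module R M] [AddCommMonoid N] [Module R N] (f : N →ₗ[R] N) (f' : M →ₗ[R] M) :
    Commute (f.lTensor M) (f'.rTensor N) := by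
  change lTensor M f ∘ₗ rTensor N f' = rTensor N f' ∘ₗ lTensor M f
  rw [lTensor_comp_rTensor, rTensor_comp_lTensor]

theorem IsPMapOn.neg_ad_pow {k g : Type*} [CommRing k] [LieRing g] [LieAlgebra k g] {p : ℕ}
    {pm : g → g} (hpm : IsPMapOn k (fun x y : g => ⁅x, y⁆) p pm) (x : g) :
    (-LieAlgebra.ad k g x) ^ p = -LieAlgebra.ad k g (pm x) := by
  have hneg_ad : ⇑(-LieAlgebra.ad k g x) = fun w => ⁅w, x⁆ := by
    funext w
    simp only [LinearMap.neg_apply, LieAlgebra.ad_apply, ← lie_skew w x]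
  ext y
  rw [Module.End.coe_pow, hneg_ad, LinearMap.neg_apply, LieAlgebra.ad_apply, ← lie_skew, neg_neg]
  exact (hpm.2.1 y x).symm

theorem bracket_one_tmul_eq_lTensor_sub_rTensor {k A g : Type*} [CommRing k] [CommRing A]
    [Algebra k A] [LieRing g] [LieAlgebra k g] (δ : g →ₗ[k] Derivation k A A)
    (br : A ⊗[k] g → A ⊗[k] g → A ⊗[k] g)
    (hbr : ∀ (a a' : A) (x y : g),
      br (a ⊗ₜ[k] x) (a' ⊗ₜ[k] y) =
        (a * a') ⊗ₜ[k] ⁅x, y⁆ + (a * δ x a') ⊗ₜ[k] y - (a' * δ y a) ⊗ₜ[k] x)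
    (x : g) (hlin : IsLinearMap k (fun u => br u ((1 : A) ⊗ₜ[k] x))) :
    (fun u => br u ((1 : A) ⊗ₜ[k] x)) =
      ⇑(lTensor A (-LieAlgebra.ad k g x) - rTensor g (δ x : A →ₗ[k] A)) := by
  funext u
  induction u using TensorProduct.induction_on with
  | zero => rw [hlin.map_zero, map_zero]
  | tmul a y =>
    simp only [hbr, LinearMap.sub_apply, LinearMap.lTensor_tmul, LinearMap.rTensor_tmul,
      LinearMap.neg_apply, LieAlgebra.ad_apply, Derivation.coeFn_coe, Derivation.map_one_eq_zero,
      mul_zero, mul_one, one_mul, TensorProduct.tmul_neg, TensorProduct.zero_tmul, add_zero,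
      ← lie_skew y x]
  | add u v hu hv => rw [hlin.map_add, hu, hv, map_add]

theorem lTensor_neg_ad_sub_rTensor_derivation_pow {k A g : Type*} [Field k] [CommRing A]
    [Algebra k A] [LieRing g] [LieAlgebra k g] (p : ℕ) [Fact p.Prime] [CharP k p] {pm : g → g}
    (hpm : IsPMapOn k (fun x y : g => ⁅x, y⁆) p pm) (δ : g →ₗ[k] Derivation k A A)
    (hδp : ∀ x : g, ⇑(δ (pm x)) = (⇑(δ x))^[p]) (x : g) :
    (lTensor A (-LieAlgebra.ad k g x) - rTensor g (δ x : A →ₗ[k] A)) ^ p =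
      lTensor A (-LieAlgebra.ad k g (pm x)) - rTensor g (δ (pm x) : A →ₗ[k] A) := by
  have hδ_pow : (δ x : A →ₗ[k] A) ^ p = δ (pm x) :=
    LinearMap.coe_injective (by rw [Module.End.coe_pow]; exact (hδp x).symm)
  rw [Module.End.sub_pow_char_of_commute p (LinearMap.commute_lTensor_rTensor _ _),
    LinearMap.lTensor_pow, LinearMap.rTensor_pow, hpm.neg_ad_pow, hδ_pow]

theorem stmt_9_general (k A g ι : Type*) [Field k] [CommRing A] [Algebra k A]
    [LieRing g] [LieAlgebra k g]
    (p : ℕ) [Fact p.Prime] [CharP k p]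
    (b : Module.Basis ι k g)
    (pm : g → g) (hpm : IsPMapOn k (fun x y : g => ⁅x, y⁆) p pm)
    (δ : g →ₗ[k] Derivation k A A)
    (hδp : ∀ x : g, ⇑(δ (pm x)) = (⇑(δ x))^[p])
    (br : TensorProduct k A g → TensorProduct k A g → TensorProduct k A g)
    (hbil : IsLieBracketOn k br)
    (hbr : ∀ (a a' : A) (x y : g),
      br (a ⊗ₜ[k] x) (a' ⊗ₜ[k] y) =
        (a * a') ⊗ₜ[k] ⁅x, y⁆ + (a * δ x a') ⊗ₜ[k] y - (a' * δ y a) ⊗ₜ[k] x)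
    (i : ι) :
    (∀ u, br u ((1 : A) ⊗ₜ[k] b i) =
        TensorProduct.map LinearMap.id (-(LieAlgebra.ad k g (b i))) u
          - TensorProduct.map (δ (b i)).toLinearMap LinearMap.id u) ∧
    (∀ u, TensorProduct.map LinearMap.id (-(LieAlgebra.ad k g (b i)))
            (TensorProduct.map (δ (b i)).toLinearMap LinearMap.id u)
        = TensorProduct.map (δ (b i)).toLinearMap LinearMap.id
            (TensorProduct.map LinearMap.id (-(LieAlgebra.ad k g (b i))) u)) ∧
    (∀ u, (fun w => br w ((1 : A) ⊗ₜ[k] b i))^[p] u = br u ((1 : A) ⊗ₜ[k] pm (b i))) := by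
  have had : ∀ x : g, (fun u => br u ((1 : A) ⊗ₜ[k] x)) =
      ⇑(lTensor A (-LieAlgebra.ad k g x) - rTensor g (δ x : A →ₗ[k] A)) :=
    fun x => bracket_one_tmul_eq_lTensor_sub_rTensor δ br hbr x (hbil.2.1 _)
  refine ⟨fun u => congrFun (had (b i)) u,
    fun u => LinearMap.congr_fun (LinearMap.commute_lTensor_rTensor _ _).eq u, fun u => ?_⟩
  rw [had, ← Module.End.coe_pow, lTensor_neg_ad_sub_rTensor_derivation_pow p hpm δ hδp]
  exact (congrFun (had (pm (b i))) u).symm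

/-- In the transformation Lie algebra `A ⊗_k g` (char `k = p`), for a basis element
`1 ⊗ g_i` one has `(ad_{1⊗g_i})^p = ad_{1⊗g_i^{[p]}}`; moreover with
`τ(a⊗x) = a ⊗ [x, g_i]` and `ρ(a⊗x) = δ(g_i)(a) ⊗ x` one has `τρ = ρτ` and
`ad_{1⊗g_i} = τ − ρ`. -/
theorem stmt_9 (k A g ι : Type*) [Field k] [CommRing A] [Algebra k A]
    [LieRing g] [LieAlgebra k g]
    (p : ℕ) [Fact p.Prime] [CharP k p]
    (b : Module.Basis ι k g)
    (pm : g → g) (hpm : IsPMapOn k (fun x y : g => ⁅x, y⁆) p pm)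
    (δ : g →ₗ[k] Derivation k A A)
    (hδLie : ∀ x y : g, δ ⁅x, y⁆ = ⁅δ x, δ y⁆)
    (hδp : ∀ x : g, ⇑(δ (pm x)) = (⇑(δ x))^[p])
    (br : TensorProduct k A g → TensorProduct k A g → TensorProduct k A g)
    (hbil : IsLieBracketOn k br)
    (hbr : ∀ (a a' : A) (x y : g),
      br (a ⊗ₜ[k] x) (a' ⊗ₜ[k] y) =
        (a * a') ⊗ₜ[k] ⁅x, y⁆ + (a * δ x a') ⊗ₜ[k] y - (a' * δ y a) ⊗ₜ[k] x)
    (i : ι) :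
    (∀ u, br u ((1 : A) ⊗ₜ[k] b i) =
        TensorProduct.map LinearMap.id (-(LieAlgebra.ad k g (b i))) u
          - TensorProduct.map (δ (b i)).toLinearMap LinearMap.id u) ∧
    (∀ u, TensorProduct.map LinearMap.id (-(LieAlgebra.ad k g (b i)))
            (TensorProduct.map (δ (b i)).toLinearMap LinearMap.id u)
        = TensorProduct.map (δ (b i)).toLinearMap LinearMap.id
            (TensorProduct.map LinearMap.id (-(LieAlgebra.ad k g (b i))) u)) ∧
    (∀ u, (fun w => br w ((1 : A) ⊗ₜ[k] b i))^[p] u = br u ((1 : A) ⊗ₜ[k] pm (b i))) :=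
  stmt_9_general k A g ι p b pm hpm δ hδp br hbil hbr i
end

section
/- Let (A, L) be a Lie-Rinehart algebra over a field k of characteristic p > 0, and let M be a Lie-Rinehart (A, L)-module. Then for all X ∈ L, a ∈ A, m ∈ M: (aX)^{p-1}(am) = a^p · X^{p-1}(m) + ((aX)^{p-1}(a)) · m, where (aX)^{p-1} denotes (p−1)-fold application of the action of aX. -/
open MvPolynomial Finset

section Stmt10Aux

variable (p : ℕ)

/-- Shift derivation on the universal polynomial ring. -/
noncomputable def st10d : Derivation (ZMod p) (MvPolynomial ℕ (ZMod p)) (MvPolynomial ℕ (ZMod p)) :=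
  mkDerivation (ZMod p) (fun i => X (i + 1))

/-- The universal operator `E = a • D`. -/
noncomputable def st10E (q : MvPolynomial ℕ (ZMod p)) : MvPolynomial ℕ (ZMod p) :=
  X 0 * st10d p q

/-- Universal coefficients. -/
noncomputable def st10c : ℕ → ℕ → MvPolynomial ℕ (ZMod p)
  | 0, 0 => 1
  | 0, _ + 1 => 0
  | n + 1, 0 => st10E p (st10c n 0)
  | n + 1, j + 1 => X 0 * st10c n j + st10E p (st10c n (j + 1))

lemma st10E_zero : st10E p 0 = 0 := by simp [st10E]

lemma st10c_lt : ∀ n j, n < j → st10c p n j = 0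
  | 0, j + 1, _ => rfl
  | n + 1, j + 1, h => by
    rw [st10c, st10c_lt n j (by omega), st10c_lt n (j + 1) (by omega), st10E_zero,
      mul_zero, add_zero]

lemma st10c_zero0 : ∀ n, st10c p (n + 1) 0 = 0
  | 0 => by simp [st10c, st10E]
  | n + 1 => by rw [st10c, st10c_zero0 n, st10E_zero]

lemma st10c_diag : ∀ n, st10c p n n = X 0 ^ n
  | 0 => by simp [st10c]
  | n + 1 => by
    rw [st10c, st10c_diag n, st10c_lt p n (n + 1) (by omega), st10E_zero, add_zero, pow_succ,
      mul_comm]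

lemma st10c_one : ∀ n, st10c p (n + 1) 1 = (st10E p)^[n] (X 0)
  | 0 => by simp [st10c, st10E]
  | n + 1 => by
    rw [st10c, st10c_zero0, mul_zero, zero_add, st10c_one n, Function.iterate_succ_apply']

/-- evaluation commutes with the shift derivation. -/
lemma st10_eval₂_d {B : Type*} [CommRing B] (δ : B → B)
    (hadd : ∀ x y, δ (x + y) = δ x + δ y)
    (hmul : ∀ x y, δ (x * y) = δ x * y + x * δ y)
    (f : ZMod p →+* B) (hf : ∀ r, δ (f r) = 0)
    (v : ℕ → B) (hv : ∀ i, δ (v i) = v (i + 1)) :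
    ∀ q : MvPolynomial ℕ (ZMod p), eval₂ f v (st10d p q) = δ (eval₂ f v q) := by
  intro q
  induction q using MvPolynomial.induction_on with
  | C r =>
      have : st10d p (C r) = 0 := by
        rw [← MvPolynomial.algebraMap_eq, Derivation.map_algebraMap]
      rw [this, eval₂_zero, eval₂_C, hf]
  | add q r hq hr => rw [map_add, eval₂_add, eval₂_add, hq, hr, hadd]
  | mul_X q i hq =>
      have hd : st10d p (q * X i) = st10d p q * X i + q * X (i + 1) := by
        rw [Derivation.leibniz]
        simp only [st10d, mkDerivation_X, smul_eq_mul]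
        ring
      rw [hd, eval₂_add, eval₂_mul, eval₂_mul, eval₂_mul, eval₂_X, eval₂_X, hq, hmul, hv]

/-- Iterated Leibniz rule for a derivation. -/
lemma st10_iterate_leibniz {R B : Type*} [CommRing R] [CommRing B] [Algebra R B]
    (δ : Derivation R B B) (x y : B) :
    ∀ n, (⇑δ)^[n] (x * y) =
      ∑ i ∈ range (n + 1), n.choose i • ((⇑δ)^[i] x * (⇑δ)^[n - i] y) := by
  intro n
  induction n with
  | zero => simp
  | succ n ih =>
    rw [Function.iterate_succ_apply', ih, map_sum]
    have hterm : ∀ i, δ (n.choose i • ((⇑δ)^[i] x * (⇑δ)^[n - i] y)) =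
        n.choose i • ((⇑δ)^[i + 1] x * (⇑δ)^[n - i] y)
          + n.choose i • ((⇑δ)^[i] x * (⇑δ)^[n - i + 1] y) := by
      intro i
      rw [map_nsmul, Derivation.leibniz, smul_eq_mul, smul_eq_mul,
        ← Function.iterate_succ_apply' δ i, ← Function.iterate_succ_apply' δ (n - i), smul_add,
        add_comm (n.choose i • ((⇑δ)^[i] x * (⇑δ)^[n - i + 1] y)),
        mul_comm ((⇑δ)^[n - i] y)]
    simp only [hterm, Finset.sum_add_distrib]
    rw [Finset.sum_range_succ' (fun i => (n + 1).choose i •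
      ((⇑δ)^[i] x * (⇑δ)^[n + 1 - i] y)) (n + 1)]
    have h1 : ∀ i, (n + 1).choose (i + 1) • ((⇑δ)^[i + 1] x * (⇑δ)^[n + 1 - (i + 1)] y)
        = n.choose i • ((⇑δ)^[i + 1] x * (⇑δ)^[n - i] y)
          + n.choose (i + 1) • ((⇑δ)^[i + 1] x * (⇑δ)^[n - i] y) := by
      intro i
      rw [Nat.choose_succ_succ, add_nsmul, Nat.succ_sub_succ]
    simp only [h1, Finset.sum_add_distrib]
    have h2 : ∑ i ∈ range (n + 1), n.choose (i + 1) • ((⇑δ)^[i + 1] x * (⇑δ)^[n - i] y)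
        = ∑ i ∈ range n, n.choose (i + 1) • ((⇑δ)^[i + 1] x * (⇑δ)^[n - i] y) := by
      rw [Finset.sum_range_succ, Nat.choose_succ_self, zero_nsmul, add_zero]
    have h3 : ∑ i ∈ range (n + 1), n.choose i • ((⇑δ)^[i] x * (⇑δ)^[n - i + 1] y)
        = ∑ i ∈ range n, n.choose (i + 1) • ((⇑δ)^[i + 1] x * (⇑δ)^[n - i] y)
          + 1 • ((⇑δ)^[0] x * (⇑δ)^[n + 1] y) := by
      rw [Finset.sum_range_succ' (fun i => n.choose i • ((⇑δ)^[i] x * (⇑δ)^[n - i + 1] y)) n]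
      congr 1
      · refine Finset.sum_congr rfl fun i hi => ?_
        have : n - (i + 1) + 1 = n - i := by
          have := Finset.mem_range.mp hi; omega
        rw [this]
      · rw [Nat.choose_zero_right, Nat.sub_zero]
    rw [h2, h3]
    have h4 : (n + 1).choose 0 • ((⇑δ)^[0] x * (⇑δ)^[n + 1 - 0] y)
        = 1 • ((⇑δ)^[0] x * (⇑δ)^[n + 1] y) := by norm_num
    rw [h4]
    abel

end Stmt10Aux
section Stmt10Q

variable (p : ℕ)

/-- Shift derivation on the big polynomial ring. -/
noncomputable def st10dQ :
    Derivation (ZMod p) (MvPolynomial (Fin 3 × ℕ) (ZMod p)) (MvPolynomial (Fin 3 × ℕ) (ZMod p)) :=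
  mkDerivation (ZMod p) (fun v => X (v.1, v.2 + 1))

/-- Inclusion of the `a`-variables. -/
noncomputable def st10ι :
    MvPolynomial ℕ (ZMod p) →ₐ[ZMod p] MvPolynomial (Fin 3 × ℕ) (ZMod p) :=
  aeval (fun i => X ((0 : Fin 3), i))

/-- The operator `E` on the big ring, as a derivation. -/
noncomputable def st10EQ :
    Derivation (ZMod p) (MvPolynomial (Fin 3 × ℕ) (ZMod p)) (MvPolynomial (Fin 3 × ℕ) (ZMod p)) :=
  (X ((0 : Fin 3), 0) : MvPolynomial (Fin 3 × ℕ) (ZMod p)) • st10dQ p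

lemma st10dQ_ι (q : MvPolynomial ℕ (ZMod p)) :
    st10dQ p (st10ι p q) = st10ι p (st10d p q) := by
  have h := st10_eval₂_d p (B := MvPolynomial (Fin 3 × ℕ) (ZMod p)) (⇑(st10dQ p))
    (fun x y => map_add _ x y)
    (fun x y => by rw [Derivation.leibniz, smul_eq_mul, smul_eq_mul]; ring)
    (algebraMap (ZMod p) _) (fun r => Derivation.map_algebraMap _ r)
    (fun i => X ((0 : Fin 3), i)) (fun i => by simp [st10dQ]) q
  rw [st10ι, aeval_def, aeval_def, h]

lemma st10EQ_ι (q : MvPolynomial ℕ (ZMod p)) :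
    st10EQ p (st10ι p q) = st10ι p (st10E p q) := by
  rw [st10EQ, Derivation.smul_apply, smul_eq_mul, st10dQ_ι, st10E, map_mul]
  congr 1
  simp [st10ι]

lemma st10EQ_apply (x : MvPolynomial (Fin 3 × ℕ) (ZMod p)) :
    st10EQ p x = X ((0 : Fin 3), 0) * st10dQ p x := by
  rw [st10EQ, Derivation.smul_apply, smul_eq_mul]

/-- Expansion of iterates of `E` in terms of the universal coefficients. -/
lemma st10_expand (n : ℕ) (x : MvPolynomial (Fin 3 × ℕ) (ZMod p)) :
    (⇑(st10EQ p))^[n] x =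
      ∑ j ∈ range (n + 1), st10ι p (st10c p n j) * (⇑(st10dQ p))^[j] x := by
  induction n with
  | zero => simp [st10c]
  | succ n ih =>
    rw [Function.iterate_succ_apply', ih, map_sum]
    have hterm : ∀ j, st10EQ p (st10ι p (st10c p n j) * (⇑(st10dQ p))^[j] x)
        = st10ι p (st10E p (st10c p n j)) * (⇑(st10dQ p))^[j] x
          + st10ι p (X 0 * st10c p n j) * (⇑(st10dQ p))^[j + 1] x := by
      intro j
      rw [Derivation.leibniz, smul_eq_mul, smul_eq_mul, st10EQ_ι, st10EQ_apply,
        ← Function.iterate_succ_apply' (⇑(st10dQ p)) j, map_mul]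
      have : st10ι p (X 0) = X ((0 : Fin 3), 0) := by simp [st10ι]
      rw [this]
      ring
    simp only [hterm, Finset.sum_add_distrib]
    rw [Finset.sum_range_succ' (fun j => st10ι p (st10c p (n + 1) j) * (⇑(st10dQ p))^[j] x) (n + 1)]
    have h1 : ∀ j, st10ι p (st10c p (n + 1) (j + 1)) * (⇑(st10dQ p))^[j + 1] x
        = st10ι p (X 0 * st10c p n j) * (⇑(st10dQ p))^[j + 1] x
          + st10ι p (st10E p (st10c p n (j + 1))) * (⇑(st10dQ p))^[j + 1] x := by
      intro j
      rw [st10c, map_add, add_mul]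
    simp only [h1, Finset.sum_add_distrib]
    have h2 : ∑ j ∈ range (n + 1), st10ι p (st10E p (st10c p n j)) * (⇑(st10dQ p))^[j] x
        = st10ι p (st10E p (st10c p n 0)) * (⇑(st10dQ p))^[0] x
          + ∑ j ∈ range n, st10ι p (st10E p (st10c p n (j + 1))) * (⇑(st10dQ p))^[j + 1] x := by
      rw [Finset.sum_range_succ' (fun j => st10ι p (st10E p (st10c p n j)) * (⇑(st10dQ p))^[j] x) n,
        add_comm]
    have h3 : ∑ j ∈ range (n + 1), st10ι p (st10E p (st10c p n (j + 1))) * (⇑(st10dQ p))^[j + 1] x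
        = ∑ j ∈ range n, st10ι p (st10E p (st10c p n (j + 1))) * (⇑(st10dQ p))^[j + 1] x := by
      rw [Finset.sum_range_succ, st10c_lt p n (n + 1) (by omega), st10E_zero, map_zero, zero_mul,
        add_zero]
    have h4 : st10ι p (st10c p (n + 1) 0) * (⇑(st10dQ p))^[0] x
        = st10ι p (st10E p (st10c p n 0)) * (⇑(st10dQ p))^[0] x := by
      rw [st10c]
    rw [h2, h3, h4]
    abel

lemma st10dQ_iter_var (t : Fin 3) (l : ℕ) : ∀ j, (⇑(st10dQ p))^[j] (X (t, l)) = X (t, l + j)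
  | 0 => by simp
  | j + 1 => by
    rw [Function.iterate_succ_apply]
    have : st10dQ p (X (t, l)) = X (t, l + 1) := by simp [st10dQ]
    rw [this, st10dQ_iter_var t (l + 1) j]
    congr 2
    omega

/-- The extraction homomorphism. -/
noncomputable def st10φ (i0 : ℕ) :
    MvPolynomial (Fin 3 × ℕ) (ZMod p) →ₐ[ZMod p] MvPolynomial ℕ (ZMod p) :=
  aeval (fun v => if v.1 = 0 then X v.2
    else if v.1 = 1 then (if v.2 = 1 then 1 else 0)
    else (if v.2 = i0 - 1 then 1 else 0))

lemma st10φ_ι (i0 : ℕ) (q : MvPolynomial ℕ (ZMod p)) : st10φ p i0 (st10ι p q) = q := by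
  have h : (st10φ p i0).comp (st10ι p) = AlgHom.id _ _ := by
    apply MvPolynomial.algHom_ext
    intro i
    simp [st10φ, st10ι]
  have h2 := DFunLike.congr_fun h q
  simpa using h2

end Stmt10Q
section Stmt10Key

lemma st10c_middle (p : ℕ) [Fact p.Prime] (i0 : ℕ) (h2 : 2 ≤ i0) (hip : i0 < p) :
    st10c p p i0 = 0 := by
  have hp : p.Prime := Fact.out
  set B0 : MvPolynomial (Fin 3 × ℕ) (ZMod p) := X ((1 : Fin 3), 0) with hB0
  set C0 : MvPolynomial (Fin 3 × ℕ) (ZMod p) := X ((2 : Fin 3), 0) with hC0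
  have hlieb := st10_iterate_leibniz (st10EQ p) B0 C0 p
  have hmid : ∀ i ∈ Finset.range (p + 1),
      p.choose i • ((⇑(st10EQ p))^[i] B0 * (⇑(st10EQ p))^[p - i] C0)
      = (if i = 0 then B0 * (⇑(st10EQ p))^[p] C0 else 0)
        + (if i = p then (⇑(st10EQ p))^[p] B0 * C0 else 0) := by
    intro i hi
    rcases eq_or_ne i 0 with rfl | h0
    · have : (0 : ℕ) ≠ p := by have := hp.pos; omega
      simp [this]
    rcases eq_or_ne i p with rfl | hpne
    · simp [h0]
    · obtain ⟨t, ht⟩ := hp.dvd_choose_self h0 (by have := Finset.mem_range.mp hi; omega)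
      have hcast : ((p * t : ℕ) : MvPolynomial (Fin 3 × ℕ) (ZMod p)) = 0 := by
        rw [Nat.cast_mul, CharP.cast_eq_zero (MvPolynomial (Fin 3 × ℕ) (ZMod p)) p, zero_mul]
      simp [ht, nsmul_eq_mul, hcast, h0, hpne]
  rw [Finset.sum_congr rfl hmid, Finset.sum_add_distrib,
    Finset.sum_ite_eq' (Finset.range (p + 1)) 0, Finset.sum_ite_eq' (Finset.range (p + 1)) p,
    if_pos (Finset.mem_range.mpr (by omega)), if_pos (Finset.mem_range.mpr (by omega))] at hlieb
  -- expand the left side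
  rw [st10_expand p p (B0 * C0)] at hlieb
  have hdQ : ∀ j, (⇑(st10dQ p))^[j] (B0 * C0)
      = ∑ i ∈ Finset.range (j + 1),
          j.choose i • (X ((1 : Fin 3), i) * X ((2 : Fin 3), j - i)) := by
    intro j
    rw [st10_iterate_leibniz (st10dQ p) B0 C0 j]
    refine Finset.sum_congr rfl fun i _ => ?_
    rw [hB0, hC0, st10dQ_iter_var, st10dQ_iter_var, zero_add, zero_add]
  simp only [hdQ] at hlieb
  -- apply the extraction homomorphism
  have hφ := congrArg (st10φ p i0) hlieb
  have hφB : ∀ i : ℕ, st10φ p i0 (X ((1 : Fin 3), i))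
      = (if i = 1 then (1 : MvPolynomial ℕ (ZMod p)) else 0) := by
    intro i
    simp [st10φ]
  have hφC : ∀ i : ℕ, st10φ p i0 (X ((2 : Fin 3), i))
      = (if i = i0 - 1 then (1 : MvPolynomial ℕ (ZMod p)) else 0) := by
    intro i
    have h20 : (2 : Fin 3) ≠ 0 := by decide
    have h21 : (2 : Fin 3) ≠ 1 := by decide
    simp [st10φ, h20, h21]
  rw [map_add, map_mul, map_mul, hφB 0, hφC 0, if_neg (by omega : (0:ℕ) ≠ 1),
    if_neg (by omega : (0:ℕ) ≠ i0 - 1), zero_mul, mul_zero, add_zero, map_sum] at hφ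
  have hterm : ∀ j ∈ Finset.range (p + 1),
      st10φ p i0 (st10ι p (st10c p p j) * ∑ i ∈ Finset.range (j + 1),
        j.choose i • (X ((1 : Fin 3), i) * X ((2 : Fin 3), j - i)))
      = if j = i0 then st10c p p j * (i0 : MvPolynomial ℕ (ZMod p)) else 0 := by
    intro j _
    rw [map_mul, st10φ_ι, map_sum]
    have hin : ∀ i ∈ Finset.range (j + 1),
        st10φ p i0 (j.choose i • (X ((1 : Fin 3), i) * X ((2 : Fin 3), j - i)))
        = if i = 1 ∧ j = i0 then (i0 : MvPolynomial ℕ (ZMod p)) else 0 := by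
      intro i hi
      rw [map_nsmul, map_mul, hφB, hφC]
      rcases eq_or_ne i 1 with rfl | hi1
      · by_cases hj : j = i0
        · simp [hj, Nat.choose_one_right, nsmul_eq_mul]
        · have hne : j - 1 ≠ i0 - 1 := by
            have := Finset.mem_range.mp hi; omega
          simp [hne, hj]
      · simp [hi1]
    rw [Finset.sum_congr rfl hin]
    by_cases hj : j = i0
    · rw [if_pos hj]
      have hrw : ∀ i ∈ Finset.range (j + 1),
          (if i = 1 ∧ j = i0 then (i0 : MvPolynomial ℕ (ZMod p)) else 0)
          = if i = 1 then (i0 : MvPolynomial ℕ (ZMod p)) else 0 := by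
        intro i _; simp [hj]
      rw [Finset.sum_congr rfl hrw, Finset.sum_ite_eq' (Finset.range (j + 1)) 1
        (fun _ => (i0 : MvPolynomial ℕ (ZMod p))), if_pos (Finset.mem_range.mpr (by omega))]
    · rw [if_neg hj]
      have hs : (∑ i ∈ Finset.range (j + 1),
          if i = 1 ∧ j = i0 then (i0 : MvPolynomial ℕ (ZMod p)) else 0) = 0 :=
        Finset.sum_eq_zero fun i _ => by simp [hj]
      rw [hs, mul_zero]
  rw [Finset.sum_congr rfl hterm, Finset.sum_ite_eq' (Finset.range (p + 1)) i0,
    if_pos (Finset.mem_range.mpr (by omega))] at hφ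
  -- now hφ : st10c p p i0 * i0 = 0
  have hu : ((i0 : ZMod p)) ≠ 0 := by
    rw [Ne, ZMod.natCast_eq_zero_iff]
    intro hdvd
    have := Nat.le_of_dvd (by omega) hdvd
    omega
  have hC : (i0 : MvPolynomial ℕ (ZMod p)) = C (i0 : ZMod p) := by
    rw [← map_natCast (C : ZMod p →+* MvPolynomial ℕ (ZMod p)) i0]
  calc st10c p p i0
      = st10c p p i0 * C (i0 : ZMod p) * C ((i0 : ZMod p)⁻¹) := by
        rw [mul_assoc, ← map_mul, mul_inv_cancel₀ hu, map_one, mul_one]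
    _ = 0 := by rw [← hC, hφ, zero_mul]
end Stmt10Key
/-- For a Lie–Rinehart algebra `(A, L)` over a field of characteristic `p > 0` and a
Lie–Rinehart `(A,L)`-module `M`:
`(aX)^{p-1}(am) = a^p · X^{p-1}(m) + ((aX)^{p-1}(a)) · m`. -/
theorem stmt_10 (k A L M : Type*) [Field k] [CommRing A] [Algebra k A]
    [LieRing L] [LieAlgebra k L] [Module A L]
    [AddCommGroup M] [Module k M] [Module A M] [LieRingModule L M]
    (p : ℕ) [Fact p.Prime] [CharP k p]
    (α : L →ₗ[A] Derivation k A A)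
    (hαLie : ∀ X Y : L, α ⁅X, Y⁆ = ⁅α X, α Y⁆)
    (hLR : ∀ (a : A) (X Y : L), ⁅X, a • Y⁆ = a • ⁅X, Y⁆ + α X a • Y)
    (h1 : ∀ (a : A) (X : L) (m : M), ⁅a • X, m⁆ = a • ⁅X, m⁆)
    (h2 : ∀ (a : A) (X : L) (m : M), ⁅X, a • m⁆ = a • ⁅X, m⁆ + α X a • m)
    (a : A) (X : L) (m : M) :
    (fun w => ⁅a • X, w⁆)^[p - 1] (a • m) =
      a ^ p • ((fun w => ⁅X, w⁆)^[p - 1] m) + ((fun b => a * α X b)^[p - 1] a) • m := by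
  classical
  have hp : p.Prime := Fact.out
  have hp2 := hp.two_le
  have hp1 : p - 1 + 1 = p := by omega
  set fA : ZMod p →+* A := (algebraMap k A).comp (ZMod.castHom dvd_rfl k) with hfA
  set vA : ℕ → A := fun i => (⇑(α X))^[i] a with hvA
  have hvA0 : vA 0 = a := by simp [hvA]
  have hev_d : ∀ q, MvPolynomial.eval₂ fA vA (st10d p q) = α X (MvPolynomial.eval₂ fA vA q) :=
    st10_eval₂_d p (⇑(α X)) (fun x y => map_add _ x y)
      (fun x y => by rw [Derivation.leibniz, smul_eq_mul, smul_eq_mul]; ring)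
      fA (fun r => by
        show (α X) ((algebraMap k A) (ZMod.castHom dvd_rfl k r)) = 0
        exact Derivation.map_algebraMap _ _)
      vA (fun i => by
        show (α X) ((⇑(α X))^[i] a) = (⇑(α X))^[i + 1] a
        exact (Function.iterate_succ_apply' (⇑(α X)) i a).symm)
  have hX0mul : ∀ q, MvPolynomial.eval₂ fA vA (MvPolynomial.X 0 * q)
      = a * MvPolynomial.eval₂ fA vA q := by
    intro q
    rw [MvPolynomial.eval₂_mul, MvPolynomial.eval₂_X, hvA0]
  have hE : ∀ q, MvPolynomial.eval₂ fA vA (st10E p q)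
      = a * α X (MvPolynomial.eval₂ fA vA q) := by
    intro q
    rw [st10E, hX0mul, hev_d]
  have hevEiter : ∀ n, MvPolynomial.eval₂ fA vA ((st10E p)^[n] (MvPolynomial.X 0))
      = (fun b => a * α X b)^[n] a := by
    intro n
    induction n with
    | zero => simpa using hvA0
    | succ n ih =>
        rw [Function.iterate_succ_apply', Function.iterate_succ_apply', hE, ih]
  have hsum : ∀ (s : Finset ℕ) (g : ℕ → M), ⁅a • X, ∑ j ∈ s, g j⁆ = ∑ j ∈ s, ⁅a • X, g j⁆ := by
    intro s g
    exact map_sum (AddMonoidHom.mk' (fun w => ⁅a • X, w⁆) (fun x y => lie_add (a • X) x y)) g s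
  have hc11 : st10c p 1 1 = MvPolynomial.X 0 := by simp [st10c, st10E]
  have key : ∀ n : ℕ, (fun w => ⁅a • X, w⁆)^[n] (a • m)
      = ∑ j ∈ Finset.range (n + 1),
          MvPolynomial.eval₂ fA vA (st10c p (n + 1) (j + 1)) • ((fun w => ⁅X, w⁆)^[j] m) := by
    intro n
    induction n with
    | zero =>
        rw [Function.iterate_zero_apply, Finset.sum_range_one]
        show a • m = MvPolynomial.eval₂ fA vA (st10c p 1 1) • ((fun w => ⁅X, w⁆)^[0] m)
        rw [hc11, MvPolynomial.eval₂_X, hvA0, Function.iterate_zero_apply]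
    | succ n ih =>
        have hit : (fun w => ⁅a • X, w⁆)^[n + 1] (a • m)
            = ⁅a • X, (fun w => ⁅a • X, w⁆)^[n] (a • m)⁆ := Function.iterate_succ_apply' _ n _
        rw [hit, ih, hsum]
        have hterm : ∀ j ∈ Finset.range (n + 1),
            ⁅a • X, MvPolynomial.eval₂ fA vA (st10c p (n + 1) (j + 1)) • ((fun w => ⁅X, w⁆)^[j] m)⁆
            = MvPolynomial.eval₂ fA vA (MvPolynomial.X 0 * st10c p (n + 1) (j + 1)) •
                ((fun w => ⁅X, w⁆)^[j + 1] m)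
              + MvPolynomial.eval₂ fA vA (st10E p (st10c p (n + 1) (j + 1))) •
                ((fun w => ⁅X, w⁆)^[j] m) := by
          intro j _
          have hW : (fun w => ⁅X, w⁆)^[j + 1] m = ⁅X, (fun w => ⁅X, w⁆)^[j] m⁆ :=
            Function.iterate_succ_apply' _ j m
          rw [h1, h2, smul_add, smul_smul, smul_smul, hX0mul, hE, hW]
        rw [Finset.sum_congr rfl hterm, Finset.sum_add_distrib]
        have hcsucc : ∀ j, st10c p (n + 2) (j + 1)
            = MvPolynomial.X 0 * st10c p (n + 1) j + st10E p (st10c p (n + 1) (j + 1)) :=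
          fun j => rfl
        have htarget : ∑ j ∈ Finset.range (n + 2),
            MvPolynomial.eval₂ fA vA (st10c p (n + 2) (j + 1)) • ((fun w => ⁅X, w⁆)^[j] m)
            = ∑ j ∈ Finset.range (n + 1),
                MvPolynomial.eval₂ fA vA (MvPolynomial.X 0 * st10c p (n + 1) (j + 1)) •
                  ((fun w => ⁅X, w⁆)^[j + 1] m)
              + ∑ j ∈ Finset.range (n + 1),
                MvPolynomial.eval₂ fA vA (st10E p (st10c p (n + 1) (j + 1))) •
                  ((fun w => ⁅X, w⁆)^[j] m) := by
          have hsplit : ∀ j ∈ Finset.range (n + 2),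
              MvPolynomial.eval₂ fA vA (st10c p (n + 2) (j + 1)) • ((fun w => ⁅X, w⁆)^[j] m)
              = MvPolynomial.eval₂ fA vA (MvPolynomial.X 0 * st10c p (n + 1) j) •
                  ((fun w => ⁅X, w⁆)^[j] m)
                + MvPolynomial.eval₂ fA vA (st10E p (st10c p (n + 1) (j + 1))) •
                  ((fun w => ⁅X, w⁆)^[j] m) := by
            intro j _
            rw [hcsucc j, MvPolynomial.eval₂_add, add_smul]
          rw [Finset.sum_congr rfl hsplit, Finset.sum_add_distrib]
          congr 1
          · rw [Finset.sum_range_succ' (fun j =>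
              MvPolynomial.eval₂ fA vA (MvPolynomial.X 0 * st10c p (n + 1) j) •
                ((fun w => ⁅X, w⁆)^[j] m)) (n + 1), st10c_zero0, mul_zero,
              MvPolynomial.eval₂_zero, zero_smul, add_zero]
          · rw [Finset.sum_range_succ, st10c_lt p (n + 1) (n + 2) (by omega), st10E_zero,
              MvPolynomial.eval₂_zero, zero_smul, add_zero]
        rw [htarget]
  have hfinal := key (p - 1)
  rw [hp1] at hfinal
  rw [hfinal]
  have hsplit : ∀ j ∈ Finset.range p,
      MvPolynomial.eval₂ fA vA (st10c p p (j + 1)) • ((fun w => ⁅X, w⁆)^[j] m)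
      = (if j = p - 1 then a ^ p • ((fun w => ⁅X, w⁆)^[p - 1] m) else 0)
        + (if j = 0 then ((fun b => a * α X b)^[p - 1] a) • m else 0) := by
    intro j hj
    have hjp := Finset.mem_range.mp hj
    rcases eq_or_ne j (p - 1) with rfl | hjtop
    · rw [if_pos rfl, if_neg (by omega : ¬(p - 1 = 0)), add_zero]
      have hdiag : st10c p p (p - 1 + 1) = MvPolynomial.X 0 ^ p := by
        rw [hp1, st10c_diag]
      rw [hdiag, MvPolynomial.eval₂_pow, MvPolynomial.eval₂_X, hvA0]
    rcases eq_or_ne j 0 with rfl | hj0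
    · rw [if_neg hjtop, if_pos rfl, zero_add]
      have hone : st10c p p 1 = (st10E p)^[p - 1] (MvPolynomial.X 0) := by
        have h := st10c_one p (p - 1)
        rwa [hp1] at h
      rw [hone, hevEiter, Function.iterate_zero_apply, zero_add]
    · rw [if_neg hjtop, if_neg hj0, st10c_middle p (j + 1) (by omega) (by omega),
        MvPolynomial.eval₂_zero, zero_smul, add_zero]
  rw [Finset.sum_congr rfl hsplit, Finset.sum_add_distrib,
    Finset.sum_ite_eq' (Finset.range p) (p - 1), Finset.sum_ite_eq' (Finset.range p) 0,
    if_pos (Finset.mem_range.mpr (by omega)), if_pos (Finset.mem_range.mpr (by omega))]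
end

section
/- Let L be a restricted Lie-Rinehart algebra over A, g a restricted Lie-Rinehart algebra with structural morphism γ : g → L, and M̄ a restricted Lie-Rinehart module with p-semilinear map p_M̄ : M̄ → M̄^L. Then there is a bijection between restricted Lie-Rinehart A-algebra morphisms f : g → M̄ ⋊_{p_M̄} L over L and Beck derivations d : g → M̄, given by f ↦ π∘f and d ↦ (X ↦ d(X) + γ(X)). -/
/-- The semidirect product bracket on `M̄ ⋊ L`. -/
def sdBr {L M : Type*} [LieRing L] [AddCommGroup M] [LieRingModule L M]
    (u v : M × L) : M × L :=
  (⁅u.2, v.1⁆ - ⁅v.2, u.1⁆, ⁅u.2, v.2⁆)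

/-- The `p`-map of `M̄ ⋊_{p_M̄} L` : `(m̄+X)^{[p]} = X^{p-1}·m̄ + X^{[p]} + p_M̄(m̄)`. -/
def sdP {L M : Type*} [LieRing L] [AddCommGroup M] [LieRingModule L M]
    (p : ℕ) (pmL : L → L) (pM : M → M) (u : M × L) : M × L :=
  ((fun w => ⁅u.2, w⁆)^[p - 1] u.1 + pM u.1, pmL u.2)

/-- A Beck derivation `d : g → M̄`. -/
def IsBeckDerivation (A : Type*) {g L M : Type*} [CommRing A] [LieRing g] [Module A g]
    [LieRing L] [AddCommGroup M] [Module A M] [LieRingModule L M]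
    (p : ℕ) (γ : g → L) (pmg : g → g) (pM : M → M) (d : g → M) : Prop :=
  IsLinearMap A d ∧
  (∀ X Y : g, d ⁅X, Y⁆ = ⁅γ X, d Y⁆ - ⁅γ Y, d X⁆) ∧
  (∀ X : g, d (pmg X) = (fun m => ⁅γ X, m⁆)^[p - 1] (d X) + pM (d X))

/-- A morphism of restricted Lie–Rinehart `A`-algebras `g → M̄ ⋊_{p_M̄} L` over `L`:
`A`-linear, bracket- and `p`-map-preserving, and the composite with the projection
to `L` is the structural morphism `γ`. -/
def IsMorOver (A : Type*) {g L M : Type*} [CommRing A] [LieRing g] [Module A g]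
    [LieRing L] [Module A L] [AddCommGroup M] [Module A M] [LieRingModule L M]
    (p : ℕ) (γ : g → L) (pmg : g → g) (pmL : L → L) (pM : M → M)
    (F : g → M × L) : Prop :=
  IsLinearMap A F ∧
  (∀ X Y : g, F ⁅X, Y⁆ = sdBr (F X) (F Y)) ∧
  (∀ X : g, F (pmg X) = sdP p pmL pM (F X)) ∧
  (∀ X : g, (F X).2 = γ X)

section SemidirectProduct

variable {A g L M : Type*} [CommRing A] [LieRing g] [Module A g] [LieRing L] [Module A L]
  [AddCommGroup M] [Module A M] [LieRingModule L M]
  {p : ℕ} {γ : g → L} {pmg : g → g} {pmL : L → L} {pM : M → M}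

theorem IsMorOver.isBeckDerivation_fst {F : g → M × L}
    (hF : IsMorOver A p γ pmg pmL pM F) :
    IsBeckDerivation A p γ pmg pM (fun X => (F X).1) := by
  obtain ⟨hFlin, hFbr, hFp, hFγ⟩ := hF
  refine ⟨(LinearMap.fst A M L ∘ₗ hFlin.mk' F).isLinear, fun X Y => ?_, fun X => ?_⟩
  · simp only [hFbr, sdBr, hFγ]
  · simp only [hFp, sdP, hFγ]

theorem IsBeckDerivation.isMorOver_prodMk {d : g → M} (hd : IsBeckDerivation A p γ pmg pM d)
    (hγlin : IsLinearMap A γ) (hγLie : ∀ X Y : g, γ ⁅X, Y⁆ = ⁅γ X, γ Y⁆)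
    (hγp : ∀ X : g, γ (pmg X) = pmL (γ X)) :
    IsMorOver A p γ pmg pmL pM (fun X => (d X, γ X)) := by
  obtain ⟨hdlin, hdbr, hdp⟩ := hd
  refine ⟨((hdlin.mk' d).prod (hγlin.mk' γ)).isLinear, fun X Y => ?_, fun X => ?_, fun _ => rfl⟩
  · simp only [hdbr, hγLie, sdBr]
  · simp only [hdp, hγp, sdP]

theorem IsMorOver.prodMk_fst_eq {F : g → M × L} (hF : IsMorOver A p γ pmg pmL pM F) :
    (fun X => ((F X).1, γ X)) = F :=
  funext fun X => Prod.ext rfl (hF.2.2.2 X).symm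

end SemidirectProduct

theorem stmt_14_general (A g L M : Type*) [CommRing A]
    [LieRing g] [Module A g]
    [LieRing L] [Module A L]
    [AddCommGroup M] [Module A M] [LieRingModule L M]
    (p : ℕ)
    (pmL : L → L)
    (pmg : g → g)
    (γ : g → L) (hγlin : IsLinearMap A γ)
    (hγLie : ∀ X Y : g, γ ⁅X, Y⁆ = ⁅γ X, γ Y⁆)
    (hγp : ∀ X : g, γ (pmg X) = pmL (γ X))
    (pM : M → M) :
    (∀ F : g → M × L, IsMorOver A p γ pmg pmL pM F →
      IsBeckDerivation A p γ pmg pM (fun X => (F X).1)) ∧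
    (∀ d : g → M, IsBeckDerivation A p γ pmg pM d →
      IsMorOver A p γ pmg pmL pM (fun X => (d X, γ X))) ∧
    (∀ F : g → M × L, IsMorOver A p γ pmg pmL pM F →
      (fun X : g => ((F X).1, γ X)) = F) ∧
    (∀ d : g → M, IsBeckDerivation A p γ pmg pM d →
      (fun X : g => ((d X, γ X) : M × L).1) = d) :=
  ⟨fun _ hF => hF.isBeckDerivation_fst,
    fun _ hd => hd.isMorOver_prodMk hγlin hγLie hγp,
    fun _ hF => hF.prodMk_fst_eq,
    fun _ _ => rfl⟩

/-- The bijection between restricted Lie–Rinehart morphisms `g → M̄ ⋊_{p_M̄} L` over `L`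
and Beck derivations `g → M̄`, given by `F ↦ π ∘ F` and `d ↦ (X ↦ d(X) + γ(X))`. -/
theorem stmt_14 (k A g L M : Type*) [Field k] [CommRing A] [Algebra k A]
    [LieRing g] [LieAlgebra k g] [Module A g]
    [LieRing L] [LieAlgebra k L] [Module A L]
    [AddCommGroup M] [Module k M] [Module A M] [LieRingModule L M]
    (p : ℕ) [Fact p.Prime] [CharP k p]
    (α : L →ₗ[A] Derivation k A A)
    (hαLie : ∀ X Y : L, α ⁅X, Y⁆ = ⁅α X, α Y⁆)
    (hLR : ∀ (a : A) (X Y : L), ⁅X, a • Y⁆ = a • ⁅X, Y⁆ + α X a • Y)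
    (pmL : L → L) (hpmL : IsPMapOn k (fun x y : L => ⁅x, y⁆) p pmL)
    (pmg : g → g) (hpmg : IsPMapOn k (fun x y : g => ⁅x, y⁆) p pmg)
    (γ : g → L) (hγlin : IsLinearMap A γ)
    (hγLie : ∀ X Y : g, γ ⁅X, Y⁆ = ⁅γ X, γ Y⁆)
    (hγp : ∀ X : g, γ (pmg X) = pmL (γ X))
    (h1 : ∀ (a : A) (X : L) (m : M), ⁅a • X, m⁆ = a • ⁅X, m⁆)
    (h2 : ∀ (a : A) (X : L) (m : M), ⁅X, a • m⁆ = a • ⁅X, m⁆ + α X a • m)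
    (hres : ∀ (X : L) (m : M), ⁅pmL X, m⁆ = (fun w => ⁅X, w⁆)^[p] m)
    (pM : M → M) (hpMadd : ∀ m m' : M, pM (m + m') = pM m + pM m')
    (hpMsemi : ∀ (c : k) (m : M), pM (c • m) = c ^ p • pM m)
    (hpMinv : ∀ (X : L) (m : M), ⁅X, pM m⁆ = 0) :
    (∀ F : g → M × L, IsMorOver A p γ pmg pmL pM F →
      IsBeckDerivation A p γ pmg pM (fun X => (F X).1)) ∧
    (∀ d : g → M, IsBeckDerivation A p γ pmg pM d →
      IsMorOver A p γ pmg pmL pM (fun X => (d X, γ X))) ∧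
    (∀ F : g → M × L, IsMorOver A p γ pmg pmL pM F →
      (fun X : g => ((F X).1, γ X)) = F) ∧
    (∀ d : g → M, IsBeckDerivation A p γ pmg pM d →
      (fun X : g => ((d X, γ X) : M × L).1) = d) :=
  stmt_14_general A g L M p pmL pmg γ hγlin hγLie hγp pM
end

section
/- Let A be a commutative k-algebra (char k = p > 0) and D a k-derivation of A. For a, b ∈ A, the following identity holds in A: (aD)^{p-1}(ab) = a^p · D^{p-1}(b) + ((aD)^{p-1}(a))·b. -/
open Finset MvPolynomial

section Gen
variable {R A : Type*} [CommRing R] [CommRing A] [Algebra R A]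

/-- Iterated Leibniz rule for a derivation. -/
theorem my_iter_leibniz (d : Derivation R A A) (n : ℕ) (x y : A) :
    (⇑d)^[n] (x * y) =
      ∑ j ∈ range (n + 1), n.choose j • ((⇑d)^[j] x * (⇑d)^[n - j] y) := by
  induction n with
  | zero => simp
  | succ n ih =>
      rw [Function.iterate_succ_apply', ih, map_sum]
      have hterm : ∀ j ∈ range (n + 1),
          d (n.choose j • ((⇑d)^[j] x * (⇑d)^[n - j] y)) =
            n.choose j • ((⇑d)^[j+1] x * (⇑d)^[(n+1) - (j+1)] y)
            + n.choose j • ((⇑d)^[j] x * (⇑d)^[(n+1) - j] y) := by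
        intro j hj
        rw [mem_range] at hj
        have h1 : n + 1 - (j + 1) = n - j := by omega
        have h2 : n + 1 - j = (n - j) + 1 := by omega
        rw [map_nsmul, Derivation.leibniz, h1, h2, Function.iterate_succ_apply',
          Function.iterate_succ_apply', smul_add, smul_eq_mul, smul_eq_mul]
        ring_nf
      rw [sum_congr rfl hterm, sum_add_distrib]
      rw [sum_range_succ' (fun j => (n+1).choose j • ((⇑d)^[j] x * (⇑d)^[(n+1) - j] y)) (n+1)]
      have hsplit : ∀ j ∈ range (n + 1),
          (n+1).choose (j+1) • ((⇑d)^[j+1] x * (⇑d)^[(n+1) - (j+1)] y)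
          = n.choose j • ((⇑d)^[j+1] x * (⇑d)^[(n+1) - (j+1)] y)
            + n.choose (j+1) • ((⇑d)^[j+1] x * (⇑d)^[(n+1) - (j+1)] y) := by
        intro j hj
        rw [Nat.choose_succ_succ, add_smul]
      rw [sum_congr rfl hsplit, sum_add_distrib, add_assoc]
      congr 1
      rw [show (n+1).choose 0 • ((⇑d)^[0] x * (⇑d)^[(n+1) - 0] y)
            = n.choose 0 • ((⇑d)^[0] x * (⇑d)^[(n+1) - 0] y) by
          rw [Nat.choose_zero_right, Nat.choose_zero_right],
        ← sum_range_succ' (fun j => n.choose j • ((⇑d)^[j] x * (⇑d)^[(n+1) - j] y)) (n+1),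
        sum_range_succ (fun j => n.choose j • ((⇑d)^[j] x * (⇑d)^[(n+1) - j] y)) (n+1),
        Nat.choose_succ_self, zero_smul, add_zero]

/-- Coefficients of the expansion of `(a·D)^n ∘ (a·)` in powers of `D`. -/
def myCoef (d : Derivation R A A) (a : A) : ℕ → ℕ → A
  | 0, 0 => a
  | 0, _+1 => 0
  | n+1, 0 => a * d (myCoef d a n 0)
  | n+1, m+1 => a * d (myCoef d a n (m+1)) + a * myCoef d a n m

theorem myCoef_eq_zero (d : Derivation R A A) (a : A) :
    ∀ n m : ℕ, n < m → myCoef d a n m = 0 := by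
  intro n
  induction n with
  | zero => intro m hm; match m, hm with
            | m+1, _ => rfl
  | succ n ih =>
      intro m hm
      match m, hm with
      | m+1, hm =>
        show a * d (myCoef d a n (m+1)) + a * myCoef d a n m = 0
        simp [ih (m+1) (by omega), ih m (by omega)]

theorem myCoef_zero_right (d : Derivation R A A) (a : A) (n : ℕ) :
    myCoef d a n 0 = (fun x => a * d x)^[n] a := by
  induction n with
  | zero => rfl
  | succ n ih =>
      show a * d (myCoef d a n 0) = _
      rw [ih, Function.iterate_succ_apply']

theorem myCoef_self (d : Derivation R A A) (a : A) (n : ℕ) :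
    myCoef d a n n = a ^ (n + 1) := by
  induction n with
  | zero => show a = a ^ 1; rw [pow_one]
  | succ n ih =>
      show a * d (myCoef d a n (n+1)) + a * myCoef d a n n = _
      rw [myCoef_eq_zero d a n (n+1) (by omega), map_zero, mul_zero, ih, zero_add, pow_succ]
      ring

theorem myCoef_expansion (d : Derivation R A A) (a : A) (n : ℕ) (x : A) :
    (fun x => a * d x)^[n] (a * x) =
      ∑ m ∈ range (n + 1), myCoef d a n m * (⇑d)^[m] x := by
  induction n with
  | zero => simp [myCoef]
  | succ n ih =>
      rw [Function.iterate_succ_apply', ih]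
      show a * d _ = _
      rw [map_sum]
      have hterm : ∀ m ∈ range (n+1),
          d (myCoef d a n m * (⇑d)^[m] x)
            = d (myCoef d a n m) * (⇑d)^[m] x + myCoef d a n m * (⇑d)^[m+1] x := by
        intro m _
        rw [Derivation.leibniz, Function.iterate_succ_apply', smul_eq_mul, smul_eq_mul]
        ring
      rw [sum_congr rfl hterm, mul_sum]
      have hterm2 : ∀ m ∈ range (n+1),
          a * (d (myCoef d a n m) * (⇑d)^[m] x + myCoef d a n m * (⇑d)^[m+1] x)
            = (a * d (myCoef d a n m)) * (⇑d)^[m] x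
              + (a * myCoef d a n m) * (⇑d)^[m+1] x := by
        intro m _; ring
      rw [sum_congr rfl hterm2, sum_add_distrib]
      rw [sum_range_succ' (fun m => myCoef d a (n+1) m * (⇑d)^[m] x) (n+1)]
      have hsplit : ∀ m ∈ range (n+1),
          myCoef d a (n+1) (m+1) * (⇑d)^[m+1] x
            = (a * d (myCoef d a n (m+1))) * (⇑d)^[m+1] x
              + (a * myCoef d a n m) * (⇑d)^[m+1] x := by
        intro m _
        show (a * d (myCoef d a n (m+1)) + a * myCoef d a n m) * (⇑d)^[m+1] x = _
        ring
      rw [sum_congr rfl hsplit, sum_add_distrib]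
      have h0 : myCoef d a (n+1) 0 * (⇑d)^[0] x = (a * d (myCoef d a n 0)) * (⇑d)^[0] x := rfl
      rw [h0, add_right_comm]
      congr 1
      rw [← sum_range_succ' (fun m => (a * d (myCoef d a n m)) * (⇑d)^[m] x) (n+1),
        sum_range_succ (fun m => (a * d (myCoef d a n m)) * (⇑d)^[m] x) (n+1),
        myCoef_eq_zero d a n (n+1) (by omega), map_zero, mul_zero, zero_mul, add_zero]

theorem myCoef_mem (d : Derivation R A A) (a : A) (S : Subalgebra R A)
    (ha : a ∈ S) (hd : ∀ s ∈ S, d s ∈ S) : ∀ n m : ℕ, myCoef d a n m ∈ S := by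
  intro n
  induction n with
  | zero => intro m; match m with
            | 0 => exact ha
            | m+1 => exact S.zero_mem
  | succ n ih =>
      intro m
      match m with
      | 0 => exact S.mul_mem ha (hd _ (ih 0))
      | m+1 => exact S.add_mem (S.mul_mem ha (hd _ (ih (m+1)))) (S.mul_mem ha (ih m))
end Gen

lemma sum_eq_two_terms {M : Type*} [AddCommMonoid M] (f : ℕ → M) (N i j : ℕ)
    (hi : i < N) (hj : j < N) (hij : i ≠ j)
    (h : ∀ m, m < N → m ≠ i → m ≠ j → f m = 0) :
    ∑ m ∈ range N, f m = f i + f j := by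
  classical
  have key : ∀ m ∈ range N,
      f m = (if m = i then f i else 0) + (if m = j then f j else 0) := by
    intro m hm
    rw [mem_range] at hm
    by_cases h1 : m = i
    · subst h1; rw [if_pos rfl, if_neg hij, add_zero]
    by_cases h2 : m = j
    · subst h2; rw [if_neg h1, if_pos rfl, zero_add]
    · rw [if_neg h1, if_neg h2, add_zero, h m hm h1 h2]
  rw [sum_congr rfl key, sum_add_distrib, sum_ite_eq' (range N) i (fun _ => f i),
    sum_ite_eq' (range N) j (fun _ => f j), if_pos (mem_range.2 hi), if_pos (mem_range.2 hj)]

section Univ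
variable (p : ℕ) [Fact p.Prime]

abbrev UVar := ℕ ⊕ (ℕ ⊕ ℕ)

def shiftVar : UVar → UVar := Sum.map (· + 1) (Sum.map (· + 1) (· + 1))

noncomputable def uD : Derivation (ZMod p) (MvPolynomial UVar (ZMod p))
    (MvPolynomial UVar (ZMod p)) :=
  MvPolynomial.mkDerivation _ (fun i => X (shiftVar i))

@[simp] lemma uD_X (i : UVar) : uD p (X i) = X (shiftVar i) :=
  MvPolynomial.mkDerivation_X _ _ _

/-- The subalgebra generated by the `a`-variables. -/
noncomputable def aSub : Subalgebra (ZMod p) (MvPolynomial UVar (ZMod p)) :=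
  Algebra.adjoin (ZMod p) (Set.range (fun i : ℕ => X (Sum.inl i)))

lemma uD_mem_aSub : ∀ s ∈ aSub p, uD p s ∈ aSub p := by
  intro s hs
  induction hs using Algebra.adjoin_induction with
  | mem x hx =>
      obtain ⟨i, rfl⟩ := hx
      rw [uD_X]
      exact Algebra.subset_adjoin ⟨i + 1, rfl⟩
  | algebraMap r => rw [Derivation.map_algebraMap]; exact (aSub p).zero_mem
  | add x y _ _ hx hy => rw [map_add]; exact (aSub p).add_mem hx hy
  | mul x y hxS hyS hx hy =>
      rw [Derivation.leibniz, smul_eq_mul, smul_eq_mul]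
      exact (aSub p).add_mem ((aSub p).mul_mem hxS hy) ((aSub p).mul_mem hyS hx)

/-- Evaluation killing the b/c variables except chosen indices. -/
noncomputable def psi (j₀ l₀ : ℕ) :
    MvPolynomial UVar (ZMod p) →ₐ[ZMod p] MvPolynomial UVar (ZMod p) :=
  aeval (fun i => match i with
    | Sum.inl i => X (Sum.inl i)
    | Sum.inr (Sum.inl j) => if j = j₀ then 1 else 0
    | Sum.inr (Sum.inr l) => if l = l₀ then 1 else 0)

lemma psi_fix (j₀ l₀ : ℕ) : ∀ s ∈ aSub p, psi p j₀ l₀ s = s := by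
  intro s hs
  induction hs using Algebra.adjoin_induction with
  | mem x hx => obtain ⟨i, rfl⟩ := hx; simp [psi]
  | algebraMap r => simp [psi]
  | add x y _ _ hx hy => rw [map_add, hx, hy]
  | mul x y _ _ hx hy => rw [map_mul, hx, hy]

/-- a₀ -/
noncomputable def aa : MvPolynomial UVar (ZMod p) := X (Sum.inl 0)
/-- b_j -/
noncomputable def bb (j : ℕ) : MvPolynomial UVar (ZMod p) := X (Sum.inr (Sum.inl j))
/-- c_l -/
noncomputable def cc (l : ℕ) : MvPolynomial UVar (ZMod p) := X (Sum.inr (Sum.inr l))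

lemma aa_mem : aa p ∈ aSub p := Algebra.subset_adjoin ⟨0, rfl⟩

noncomputable def uE : Derivation (ZMod p) (MvPolynomial UVar (ZMod p))
    (MvPolynomial UVar (ZMod p)) := aa p • uD p

lemma uE_apply (x : MvPolynomial UVar (ZMod p)) : uE p x = aa p * uD p x := rfl

lemma uE_coe : ⇑(uE p) = fun x => aa p * uD p x := rfl

lemma uD_iter_bb (j n : ℕ) : (⇑(uD p))^[n] (bb p j) = bb p (j + n) := by
  induction n with
  | zero => rfl
  | succ n ih =>
      rw [Function.iterate_succ_apply', ih]
      show uD p (X _) = _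
      rw [uD_X]
      rfl

lemma uD_iter_cc (l n : ℕ) : (⇑(uD p))^[n] (cc p l) = cc p (l + n) := by
  induction n with
  | zero => rfl
  | succ n ih =>
      rw [Function.iterate_succ_apply', ih]
      show uD p (X _) = _
      rw [uD_X]
      rfl

lemma uEpow_deriv (x y : MvPolynomial UVar (ZMod p)) :
    (⇑(uE p))^[p] (x * y) = x * (⇑(uE p))^[p] y + ((⇑(uE p))^[p] x) * y := by
  have hp : p.Prime := Fact.out
  rw [my_iter_leibniz (uE p) p x y,
    sum_eq_two_terms _ (p+1) 0 p (by omega) (by omega) (ne_of_lt hp.pos)]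
  · simp
  · intro m hm h0 hp'
    have hdvd : p ∣ p.choose m := hp.dvd_choose_self h0 (by omega)
    have : ((p.choose m : ℕ) : MvPolynomial UVar (ZMod p)) = 0 :=
      (CharP.cast_eq_zero_iff _ p _).2 hdvd
    rw [nsmul_eq_mul, this, zero_mul]
end Univ

section Univ2
variable (p : ℕ) [Fact p.Prime]

noncomputable def uc (m : ℕ) : MvPolynomial UVar (ZMod p) :=
  myCoef (uD p) (aa p) (p - 1) m

lemma uc_mem (m : ℕ) : uc p m ∈ aSub p :=
  myCoef_mem _ _ _ (aa_mem p) (uD_mem_aSub p) _ _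

lemma uE_iter_expansion (n : ℕ) (x : MvPolynomial UVar (ZMod p)) :
    (⇑(uE p))^[n] (aa p * x) =
      ∑ m ∈ range (n + 1), myCoef (uD p) (aa p) n m * (⇑(uD p))^[m] x := by
  rw [uE_coe]
  exact myCoef_expansion (uD p) (aa p) n x

lemma uE_pow_p (x : MvPolynomial UVar (ZMod p)) :
    (⇑(uE p))^[p] x = ∑ m ∈ range p, uc p m * (⇑(uD p))^[m+1] x := by
  have hp : p.Prime := Fact.out
  have h1 : p - 1 + 1 = p := Nat.succ_pred_eq_of_pos hp.pos
  have h2 := Function.iterate_succ_apply (⇑(uE p)) (p - 1) x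
  rw [Nat.succ_eq_add_one, h1] at h2
  rw [h2, show uE p x = aa p * uD p x from rfl, uE_iter_expansion, h1]
  refine sum_congr rfl fun m _ => ?_
  rw [← Function.iterate_succ_apply]
  rfl

lemma uc_middle_zero (m : ℕ) (h1 : 1 ≤ m) (h2 : m ≤ p - 2) : uc p m = 0 := by
  have hp : p.Prime := Fact.out
  have hp2 : 2 ≤ p := hp.two_le
  have hmp : m < p := by omega
  -- the main equation
  have E1 := uEpow_deriv p (bb p 0) (cc p 0)
  rw [uE_pow_p, uE_pow_p, uE_pow_p] at E1
  have hL : ∀ n ∈ range p,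
      uc p n * (⇑(uD p))^[n+1] (bb p 0 * cc p 0)
        = uc p n * ∑ j ∈ range (n + 2),
            (n+1).choose j • (bb p j * cc p (n + 1 - j)) := by
    intro n _
    rw [my_iter_leibniz (uD p) (n+1) (bb p 0) (cc p 0)]
    congr 1
    exact sum_congr rfl fun j _ => by rw [uD_iter_bb, uD_iter_cc, zero_add, zero_add]
  rw [sum_congr rfl hL] at E1
  have hR1 : ∀ n ∈ range p,
      uc p n * (⇑(uD p))^[n+1] (cc p 0) = uc p n * cc p (n+1) := by
    intro n _; rw [uD_iter_cc, zero_add]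
  have hR2 : ∀ n ∈ range p,
      uc p n * (⇑(uD p))^[n+1] (bb p 0) = uc p n * bb p (n+1) := by
    intro n _; rw [uD_iter_bb, zero_add]
  rw [sum_congr rfl hR1, sum_congr rfl hR2] at E1
  -- apply psi 1 m
  have E2 := congrArg (psi p 1 m) E1
  rw [map_sum, map_add, map_mul, map_mul, map_sum, map_sum, mul_sum, sum_mul] at E2
  have hpsib : ∀ j : ℕ, psi p 1 m (bb p j) = if j = 1 then 1 else 0 := by
    intro j; simp [psi, bb]
  have hpsic : ∀ l : ℕ, psi p 1 m (cc p l) = if l = m then 1 else 0 := by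
    intro l; simp [psi, cc]
  have hL2 : ∀ n ∈ range p,
      psi p 1 m (uc p n * ∑ j ∈ range (n + 2),
          (n+1).choose j • (bb p j * cc p (n + 1 - j)))
        = if n = m then (m+1) • uc p m else 0 := by
    intro n hn
    rw [map_mul, psi_fix p 1 m _ (uc_mem p n), map_sum]
    have hinner : ∀ j ∈ range (n + 2),
        psi p 1 m ((n+1).choose j • (bb p j * cc p (n + 1 - j)))
          = if j = 1 ∧ n = m then ((n+1).choose 1 : ℕ) • (1 : MvPolynomial UVar (ZMod p))
            else 0 := by
      intro j hj
      rw [map_nsmul, map_mul, hpsib, hpsic]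
      by_cases hj1 : j = 1
      · subst hj1
        by_cases hnm : n = m
        · subst hnm
          rw [if_pos rfl, if_pos (by omega)]
          simp
        · rw [if_pos rfl, if_neg (by omega)]
          simp [hnm]
      · rw [if_neg hj1]
        simp [hj1]
    rw [sum_congr rfl hinner]
    by_cases hnm : n = m
    · subst hnm
      rw [if_pos rfl]
      simp only [eq_self_iff_true, and_true]
      rw [sum_ite_eq' (range (n+2)) 1
          (fun _ => ((n+1).choose 1 : ℕ) • (1 : MvPolynomial UVar (ZMod p))),
        if_pos (mem_range.2 (by omega))]
      rw [Nat.choose_one_right, nsmul_eq_mul, nsmul_eq_mul, mul_one, mul_comm]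
    · rw [if_neg hnm]
      have : ∀ j ∈ range (n+2),
          (if j = 1 ∧ n = m then ((n+1).choose 1 : ℕ) • (1 : MvPolynomial UVar (ZMod p))
            else 0) = 0 := by
        intro j _; rw [if_neg (by simp [hnm])]
      rw [sum_congr rfl this, sum_const_zero, mul_zero]
  rw [sum_congr rfl hL2] at E2
  rw [sum_ite_eq' (range p) m (fun _ => (m+1) • uc p m), if_pos (mem_range.2 hmp)] at E2
  have hzero : ∀ n ∈ range p,
      psi p 1 m (bb p 0) * psi p 1 m (uc p n * cc p (n + 1)) = 0 := by
    intro n _; rw [hpsib 0, if_neg (by omega), zero_mul]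
  have hzero2 : ∀ n ∈ range p,
      psi p 1 m (uc p n * bb p (n + 1)) * psi p 1 m (cc p 0) = 0 := by
    intro n _; rw [hpsic 0, if_neg (by omega), mul_zero]
  rw [sum_congr rfl hzero, sum_congr rfl hzero2, sum_const_zero, add_zero] at E2
  -- now E2 : (m+1) • uc p m = 0
  have hcast : ((m + 1 : ℕ) : ZMod p) ≠ 0 := by
    rw [Ne, ZMod.natCast_eq_zero_iff]
    intro hdvd
    have := Nat.le_of_dvd (by omega) hdvd
    omega
  have h3 : ((m + 1 : ℕ) : MvPolynomial UVar (ZMod p)) * uc p m = 0 := by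
    rw [← nsmul_eq_mul, E2]
  rw [(map_natCast (C : ZMod p →+* MvPolynomial UVar (ZMod p)) (m+1)).symm] at h3
  calc uc p m = C (((m + 1 : ℕ) : ZMod p))⁻¹ * (C ((m + 1 : ℕ) : ZMod p) * uc p m) := by
        rw [← mul_assoc, ← C_mul, inv_mul_cancel₀ hcast, C_1, one_mul]
    _ = 0 := by rw [h3, mul_zero]
end Univ2

section Univ3
variable (p : ℕ) [Fact p.Prime]

lemma univ_main (x : MvPolynomial UVar (ZMod p)) :
    (⇑(uE p))^[p-1] (aa p * x) =
      (aa p) ^ p * (⇑(uD p))^[p-1] x + ((⇑(uE p))^[p-1] (aa p)) * x := by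
  have hp : p.Prime := Fact.out
  have hp2 : 2 ≤ p := hp.two_le
  have h1 : p - 1 + 1 = p := by omega
  have hE := uE_iter_expansion p (p-1) x
  rw [h1] at hE
  rw [hE, sum_eq_two_terms _ p 0 (p-1) (by omega) (by omega) (by omega)
      (fun m hm hm0 hm1 => by
        rw [show myCoef (uD p) (aa p) (p-1) m = uc p m from rfl,
          uc_middle_zero p m (by omega) (by omega), zero_mul])]
  rw [myCoef_zero_right, myCoef_self, h1, Function.iterate_zero_apply, add_comm]
  rfl
end Univ3

/-- For a `k`-derivation `D` of a commutative `k`-algebra `A` in characteristic `p > 0`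
and `a b ∈ A`: `(aD)^{p-1}(ab) = a^p·D^{p-1}(b) + ((aD)^{p-1}(a))·b`. -/
theorem stmt_16 (k A : Type*) [Field k] [CommRing A] [Algebra k A]
    (p : ℕ) [Fact p.Prime] [CharP k p] (D : Derivation k A A) (a b : A) :
    (fun x => a * D x)^[p - 1] (a * b) =
      a ^ p * (⇑D)^[p - 1] b + ((fun x => a * D x)^[p - 1] a) * b := by
  have hp : p.Prime := Fact.out
  by_cases hA : Subsingleton A
  · exact Subsingleton.elim _ _
  haveI : Nontrivial A := not_subsingleton_iff_nontrivial.mp hA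
  haveI : CharP A p := charP_of_injective_algebraMap (algebraMap k A).injective p
  haveI : NeZero p := ⟨hp.pos.ne'⟩
  letI : Algebra (ZMod p) A := ZMod.algebra A p
  set v : UVar → A := fun i => match i with
    | Sum.inl i => (⇑D)^[i] a
    | Sum.inr (Sum.inl j) => (⇑D)^[j] b
    | Sum.inr (Sum.inr l) => (⇑D)^[l] b
    with hvdef
  set φ : MvPolynomial UVar (ZMod p) →ₐ[ZMod p] A := aeval v with hφdef
  have hv : ∀ i, D (v i) = v (shiftVar i) := by
    intro i
    match i with
    | Sum.inl i => exact (Function.iterate_succ_apply' (⇑D) i a).symm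
    | Sum.inr (Sum.inl j) => exact (Function.iterate_succ_apply' (⇑D) j b).symm
    | Sum.inr (Sum.inr l) => exact (Function.iterate_succ_apply' (⇑D) l b).symm
  have hDnat : ∀ n : ℕ, D ((n : A)) = 0 := by
    intro n
    have : ((n : A)) = n • (1 : A) := by simp
    rw [this, map_nsmul, Derivation.map_one_eq_zero, smul_zero]
  have hint : ∀ x, φ (uD p x) = D (φ x) := by
    intro x
    induction x using MvPolynomial.induction_on with
    | C r =>
        obtain ⟨n, rfl⟩ := ZMod.natCast_zmod_surjective (n := p) r
        rw [show (C ((n : ZMod p)) : MvPolynomial UVar (ZMod p))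
              = algebraMap (ZMod p) _ ((n : ZMod p)) from rfl,
          Derivation.map_algebraMap, map_zero]
        rw [AlgHom.commutes,
          show algebraMap (ZMod p) A ((n : ZMod p)) = ((n : A)) from map_natCast _ n, hDnat]
    | add f g hf hg =>
        simp only [map_add, hf, hg]
    | mul_X q i hq =>
        rw [Derivation.leibniz, smul_eq_mul, smul_eq_mul, map_add, map_mul, map_mul,
          map_mul, uD_X]
        have hX : ∀ j, φ (X j) = v j := fun j => aeval_X v j
        rw [hX, hX, hq, Derivation.leibniz, smul_eq_mul, smul_eq_mul, hv i]
  have hφaa : φ (aa p) = a := aeval_X v (Sum.inl 0)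
  have hintE : ∀ n x, φ ((⇑(uE p))^[n] x) = (fun y => a * D y)^[n] (φ x) := by
    intro n
    induction n with
    | zero => intro x; rfl
    | succ n ih =>
        intro x
        rw [Function.iterate_succ_apply, Function.iterate_succ_apply, ih (uE p x)]
        congr 1
        rw [show uE p x = aa p * uD p x from rfl, map_mul, hφaa, hint]
  have hmain := congrArg φ (univ_main p (bb p 0))
  rw [map_add, map_mul, map_mul, map_pow, hintE, hintE, hφaa] at hmain
  have hDb : φ ((⇑(uD p))^[p-1] (bb p 0)) = (⇑D)^[p-1] b := by
    rw [uD_iter_bb, zero_add]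
    exact aeval_X v (Sum.inr (Sum.inl (p-1)))
  have hab : φ (aa p * bb p 0) = a * b := by
    rw [map_mul, hφaa]
    exact congrArg (a * ·) (aeval_X v (Sum.inr (Sum.inl 0)))
  have hb : φ (bb p 0) = b := aeval_X v (Sum.inr (Sum.inl 0))
  rw [hDb, hab, hb] at hmain
  exact hmain
end
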